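/- arXiv:1906.02411 — 7 statements merged into one kernel-verified Lean document; each statement's English description precedes it below -/
import Mathlib

section
/- If there exists a hierarchy-preserving map from hierarchy H(T) to hierarchy H(T'), then there exists a unique maximal hierarchy-preserving map from H(T) to H(T'); i.e., a hierarchy-preserving map δ such that for every hierarchy-preserving map φ : H(T) → H(T') we have φ(A) ⊆ δ(A) for all A ∈ H(T). -/
open Finset

variable {X : Type*} [DecidableEq X] [Fintype X]

/-- A hierarchy on a finite set `X`: a collection of subsets of `X` containing `X`
and all singletons, whose members are nonempty and pairwise disjoint or nested. -/
def IsHierarchy (H : Finset (Finset X)) : Prop :=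
  (Finset.univ ∈ H) ∧ (∀ x : X, {x} ∈ H) ∧ (∀ A ∈ H, A.Nonempty) ∧
    ∀ A ∈ H, ∀ B ∈ H, A ∩ B = ∅ ∨ A ⊆ B ∨ B ⊆ A

/-- A hierarchy-preserving map from `H` to `H'`: fixes singletons, is enveloping and
subset-preserving. -/
def IsHPMap (H H' : Finset (Finset X)) (δ : Finset X → Finset X) : Prop :=
  (∀ A ∈ H, δ A ∈ H') ∧ (∀ x : X, δ {x} = {x}) ∧
    (∀ A ∈ H, A ⊆ δ A) ∧ ∀ A ∈ H, ∀ B ∈ H, A ⊂ B → δ A ⊂ δ B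

/-- Two members of a hierarchy with a common nonempty subset are nested. -/
lemma hierarchy_nested {H' : Finset (Finset X)} (hH' : IsHierarchy H')
    {B C A : Finset X} (hB : B ∈ H') (hC : C ∈ H') (hA : A.Nonempty)
    (hAB : A ⊆ B) (hAC : A ⊆ C) : B ⊆ C ∨ C ⊆ B := by
  rcases hH'.2.2.2 B hB C hC with h | h | h
  · exfalso
    obtain ⟨x, hx⟩ := hA
    have : x ∈ B ∩ C := Finset.mem_inter.mpr ⟨hAB hx, hAC hx⟩
    simp [h] at this
  · exact Or.inl h
  · exact Or.inr h

/-- The sup over a nonempty finite family of HP maps is attained by one of them. -/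
lemma sup_eq_some {H H' : Finset (Finset X)} (hH : IsHierarchy H) (hH' : IsHierarchy H')
    (s : Finset (Finset X → Finset X)) (hs : s.Nonempty)
    (hall : ∀ φ ∈ s, IsHPMap H H' φ) {A : Finset X} (hA : A ∈ H) :
    ∃ φ ∈ s, s.sup (fun ψ => ψ A) = φ A := by
  have hAne : A.Nonempty := hH.2.2.1 A hA
  induction s using Finset.cons_induction with
  | empty => exact absurd hs (by simp)
  | cons a t hat ih =>
    rcases t.eq_empty_or_nonempty with rfl | htne
    · exact ⟨a, by simp⟩
    · obtain ⟨φ, hφt, heq⟩ := ih htne (fun ψ hψ => hall ψ (Finset.mem_cons_of_mem hψ))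
      have haHP := hall a (Finset.mem_cons_self a t)
      have hφHP := hall φ (Finset.mem_cons_of_mem hφt)
      have hnest := hierarchy_nested hH' (haHP.1 A hA) (hφHP.1 A hA) hAne
        (haHP.2.2.1 A hA) (hφHP.2.2.1 A hA)
      rw [Finset.sup_cons, heq]
      rcases hnest with h | h
      · exact ⟨φ, Finset.mem_cons_of_mem hφt, sup_eq_right.mpr h⟩
      · exact ⟨a, Finset.mem_cons_self a t, sup_eq_left.mpr h⟩

/-- if some hierarchy-preserving map from `H` to `H'` exists, then there is a
hierarchy-preserving map `δ` that pointwise dominates all others, and it is unique on `H`. -/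
theorem exists_unique_maximal_hpMap (H H' : Finset (Finset X))
    (hH : IsHierarchy H) (hH' : IsHierarchy H')
    (hex : ∃ δ : Finset X → Finset X, IsHPMap H H' δ) :
    ∃ δ : Finset X → Finset X, (IsHPMap H H' δ ∧
        ∀ φ : Finset X → Finset X, IsHPMap H H' φ → ∀ A ∈ H, φ A ⊆ δ A) ∧
      ∀ δ' : Finset X → Finset X,
        (IsHPMap H H' δ' ∧ ∀ φ : Finset X → Finset X, IsHPMap H H' φ → ∀ A ∈ H, φ A ⊆ δ' A) →
        ∀ A ∈ H, δ' A = δ A := by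
  classical
  obtain ⟨δ₀, hδ₀⟩ := hex
  set s : Finset (Finset X → Finset X) := Finset.univ.filter (fun φ => IsHPMap H H' φ)
    with hsdef
  have hmem : ∀ φ, φ ∈ s ↔ IsHPMap H H' φ := by intro φ; simp [hsdef]
  have hall : ∀ φ ∈ s, IsHPMap H H' φ := fun φ hφ => (hmem φ).mp hφ
  have hsne : s.Nonempty := ⟨δ₀, (hmem δ₀).mpr hδ₀⟩
  refine ⟨fun A => s.sup (fun ψ => ψ A), ⟨⟨?_, ?_, ?_, ?_⟩, ?_⟩, ?_⟩
  · intro A hA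
    show s.sup (fun ψ => ψ A) ∈ H'
    obtain ⟨φ, hφs, heq⟩ := sup_eq_some hH hH' s hsne hall hA
    rw [heq]
    exact (hall φ hφs).1 A hA
  · intro x
    show s.sup (fun ψ => ψ {x}) = {x}
    have : s.sup (fun ψ => ψ {x}) = s.sup (fun _ => ({x} : Finset X)) :=
      Finset.sup_congr rfl (fun φ hφ => (hall φ hφ).2.1 x)
    rw [this, Finset.sup_const hsne]
  · intro A hA
    show A ⊆ s.sup (fun ψ => ψ A)
    exact (hδ₀.2.2.1 A hA).trans
      (Finset.le_sup (f := fun ψ => ψ A) ((hmem δ₀).mpr hδ₀))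
  · intro A hA B hB hAB
    show s.sup (fun ψ => ψ A) ⊂ s.sup (fun ψ => ψ B)
    obtain ⟨φ, hφs, heq⟩ := sup_eq_some hH hH' s hsne hall hA
    rw [heq]
    exact lt_of_lt_of_le ((hall φ hφs).2.2.2 A hA B hB hAB)
      (Finset.le_sup (f := fun ψ => ψ B) hφs)
  · intro φ hφ A hA
    exact Finset.le_sup (f := fun ψ => ψ A) ((hmem φ).mpr hφ)
  · rintro δ' ⟨hδ'HP, hδ'dom⟩ A hA
    show δ' A = s.sup (fun ψ => ψ A)
    refine le_antisymm (Finset.le_sup (f := fun ψ => ψ A) ((hmem δ').mpr hδ'HP)) ?_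
    exact Finset.sup_le (fun φ hφs => hδ'dom φ (hall φ hφs) A hA)
end

section
/- Let H be a hierarchy on X and let A, B be distinct inclusion-maximal proper subsets of some D ∈ H that are members of H, with A ∪ B ≠ D. Then the collection obtained from H by deleting each of A and B that has more than one element and adding A ∪ B is again a hierarchy on X (the 'binding' of H at A ∪ B). -/
open Finset

variable {X : Type*} [DecidableEq X] [Fintype X]

/-- `T ≤_HP T'`: there exists a hierarchy-preserving map from `H(T)` to `H(T')`. -/
def LeHP (H H' : Finset (Finset X)) : Prop :=
  ∃ δ : Finset X → Finset X, IsHPMap H H' δ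

/-- `A` is an inclusion-maximal (proper) subcluster of `D` in `H`. -/
def IsMaxSub (H : Finset (Finset X)) (A D : Finset X) : Prop :=
  A ∈ H ∧ D ∈ H ∧ A ⊂ D ∧ ∀ C ∈ H, ¬(A ⊂ C ∧ C ⊂ D)

/-- The binding of `H` at `A ∪ B`: delete the non-singleton members of `{A, B}` and
add `A ∪ B`. -/
def binding (H : Finset (Finset X)) (A B : Finset X) : Finset (Finset X) :=
  (H.filter fun C => ¬((C = A ∨ C = B) ∧ 1 < C.card)) ∪ {A ∪ B}

/-
The only new member is `A ∪ B`, so the point is that it is nested with or disjoint from every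
cluster `C`. Compare `C` with the common parent `D`: the cases `C ∩ D = ∅` and `D ⊆ C` are
immediate. If `C ⊊ D`, maximality forbids `A ⊊ C` and `B ⊊ C`, so `C` lies in `A` or in `B`,
or misses both.
-/

namespace IsHierarchy

variable {H : Finset (Finset X)}

theorem filter_union_singleton (hH : IsHierarchy H) {p : Finset X → Prop} [DecidablePred p]
    (huniv : p univ) (hsingleton : ∀ x, p {x}) {S : Finset X} (hS : S.Nonempty)
    (hcompat : ∀ C ∈ H, C ∩ S = ∅ ∨ C ⊆ S ∨ S ⊆ C) :
    IsHierarchy (H.filter p ∪ {S}) := by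
  obtain ⟨hu, hs, hne, hpw⟩ := hH
  have hmem : ∀ C ∈ H.filter p ∪ {S}, C ∈ H ∨ C = S := by
    intro C hC
    rcases mem_union.1 hC with hC | hC
    · exact .inl (mem_filter.1 hC).1
    · exact .inr (mem_singleton.1 hC)
  refine ⟨mem_union_left _ (mem_filter.2 ⟨hu, huniv⟩),
    fun x => mem_union_left _ (mem_filter.2 ⟨hs x, hsingleton x⟩), ?_, ?_⟩
  · intro C hC
    rcases hmem C hC with hC | rfl
    exacts [hne C hC, hS]
  · intro C hC E hE
    rcases hmem C hC with hCH | rfl <;> rcases hmem E hE with hEH | rfl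
    · exact hpw C hCH E hEH
    · exact hcompat C hCH
    · rw [inter_comm]
      exact (hcompat E hEH).imp_right Or.symm
    · exact .inr (.inl subset_rfl)

theorem subset_or_inter_eq_empty_of_ssubset (hH : IsHierarchy H) {A C D : Finset X}
    (hA : IsMaxSub H A D) (hC : C ∈ H) (hCD : C ⊂ D) : C ⊆ A ∨ C ∩ A = ∅ := by
  rcases hH.2.2.2 C hC A hA.1 with h | h | h
  · exact .inr h
  · exact .inl h
  · obtain rfl | hAC := h.eq_or_ssubset
    · exact .inl subset_rfl
    · exact (hA.2.2.2 C hC ⟨hAC, hCD⟩).elim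

theorem union_disjoint_or_nested (hH : IsHierarchy H) {A B C D : Finset X}
    (hA : IsMaxSub H A D) (hB : IsMaxSub H B D) (hC : C ∈ H) :
    C ∩ (A ∪ B) = ∅ ∨ C ⊆ A ∪ B ∨ A ∪ B ⊆ C := by
  have hABD : A ∪ B ⊆ D := union_subset hA.2.2.1.subset hB.2.2.1.subset
  rcases hH.2.2.2 C hC D hA.2.1 with h | h | h
  · exact .inl (subset_empty.1 (h ▸ inter_subset_inter_left hABD))
  · obtain rfl | hCD := h.eq_or_ssubset
    · exact .inr (.inr hABD)
    rcases hH.subset_or_inter_eq_empty_of_ssubset hA hC hCD with hCA | hCA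
    · exact .inr (.inl (hCA.trans subset_union_left))
    rcases hH.subset_or_inter_eq_empty_of_ssubset hB hC hCD with hCB | hCB
    · exact .inr (.inl (hCB.trans subset_union_right))
    · exact .inl (by rw [inter_union_distrib_left, hCA, hCB, union_empty])
  · exact .inr (.inr (hABD.trans h))

end IsHierarchy

theorem binding_isHierarchy_general (H : Finset (Finset X)) (A B D : Finset X)
    (hH : IsHierarchy H) (hA : IsMaxSub H A D) (hB : IsMaxSub H B D) :
    IsHierarchy (binding H A B) := by
  refine hH.filter_union_singleton ?_ ?_ ((hH.2.2.1 A hA.1).mono subset_union_left)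
    (fun C hC => hH.union_disjoint_or_nested hA hB hC)
  · rintro ⟨h | h, -⟩
    exacts [(hA.2.2.1.trans_le (subset_univ D)).ne h.symm,
      (hB.2.2.1.trans_le (subset_univ D)).ne h.symm]
  · rintro x ⟨-, h⟩
    simp at h

/-- the binding of a hierarchy at the union of two distinct inclusion-maximal
subclusters of a cluster `D` (with `A ∪ B ≠ D`) is again a hierarchy. -/
theorem binding_isHierarchy (H : Finset (Finset X)) (A B D : Finset X)
    (hH : IsHierarchy H) (hA : IsMaxSub H A D) (hB : IsMaxSub H B D)
    (hAB : A ≠ B) (hU : A ∪ B ≠ D) :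
    IsHierarchy (binding H A B) :=
  binding_isHierarchy_general H A B D hH hA hB
end

section
/- Suppose T ≤_HP T' with maximal hierarchy-preserving map δ : H(T) → H(T'), and suppose A, B, C are three distinct inclusion-maximal subclusters of a cluster D in H(T) such that δ(A) = δ(B) and δ(A) ⊇ A ∪ B ∪ C. Then the binding T'' of T at A ∪ B satisfies T <_HP T'' <_HP T', with both inequalities strict. -/
open Finset

variable {X : Type*} [DecidableEq X] [Fintype X]

/-- `δ` is the maximal hierarchy-preserving map from `H` to `H'`: it pointwise dominates
every hierarchy-preserving map from `H` to `H'`. -/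
def IsMaxHPMap (H H' : Finset (Finset X)) (δ : Finset X → Finset X) : Prop :=
  IsHPMap H H' δ ∧ ∀ φ : Finset X → Finset X, IsHPMap H H' φ → ∀ A ∈ H, φ A ⊆ δ A

section Aux

variable {H : Finset (Finset X)} {A B D : Finset X}

lemma hier_nested (hH : IsHierarchy H) {P Q : Finset X} (hP : P ∈ H) (hQ : Q ∈ H)
    (hx : (P ∩ Q).Nonempty) : P ⊆ Q ∨ Q ⊆ P := by
  rcases hH.2.2.2 P hP Q hQ with h | h | h
  · rw [h] at hx; exact absurd hx (by simp)
  · exact Or.inl h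
  · exact Or.inr h

lemma maxsub_disj (hH : IsHierarchy H) (hA : IsMaxSub H A D) (hB : IsMaxSub H B D)
    (hAB : A ≠ B) : A ∩ B = ∅ := by
  rcases hH.2.2.2 A hA.1 B hB.1 with h | h | h
  · exact h
  · exact absurd ⟨h.ssubset_of_ne hAB, hB.2.2.1⟩ (hA.2.2.2 B hB.1)
  · exact absurd ⟨h.ssubset_of_ne hAB.symm, hA.2.2.1⟩ (hB.2.2.2 A hA.1)

lemma maxsub_above (hH : IsHierarchy H) (hA : IsMaxSub H A D) {Q : Finset X}
    (hQ : Q ∈ H) (hAQ : A ⊂ Q) : D ⊆ Q := by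
  obtain ⟨a, ha⟩ := hH.2.2.1 A hA.1
  rcases hier_nested hH hQ hA.2.1 ⟨a, mem_inter.mpr ⟨hAQ.subset ha, hA.2.2.1.subset ha⟩⟩ with
    h | h
  · rcases eq_or_ne Q D with rfl | hne
    · exact Finset.Subset.refl _
    · exact absurd ⟨hAQ, h.ssubset_of_ne hne⟩ (hA.2.2.2 Q hQ)
  · exact h

end Aux

/-- if `δ` is the maximal hierarchy-preserving map witnessing `T ≤_HP T'`,
and `A, B, C` are three distinct inclusion-maximal subclusters of `D` with
`δ(A) = δ(B) ⊇ A ∪ B ∪ C`, then `T <_HP binding T A B <_HP T'` strictly. -/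
theorem binding_strictly_between (H H' : Finset (Finset X)) (δ : Finset X → Finset X)
    (A B C D : Finset X)
    (hH : IsHierarchy H) (hH' : IsHierarchy H') (hδ : IsMaxHPMap H H' δ)
    (hA : IsMaxSub H A D) (hB : IsMaxSub H B D) (hC : IsMaxSub H C D)
    (hAB : A ≠ B) (hAC : A ≠ C) (hBC : B ≠ C)
    (hδAB : δ A = δ B) (hcontain : A ∪ B ∪ C ⊆ δ A) :
    (LeHP H (binding H A B) ∧ H ≠ binding H A B) ∧
      (LeHP (binding H A B) H' ∧ binding H A B ≠ H') := by
  obtain ⟨⟨hδmem, hδsing, hδenv, hδstrict⟩, -⟩ := hδ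
  have hAH := hA.1
  have hBH := hB.1
  have hCH := hC.1
  have hDH := hA.2.1
  have dAB : A ∩ B = ∅ := maxsub_disj hH hA hB hAB
  have dAC : A ∩ C = ∅ := maxsub_disj hH hA hC hAC
  have dBC : B ∩ C = ∅ := maxsub_disj hH hB hC hBC
  obtain ⟨c, hc⟩ := hH.2.2.1 C hCH
  obtain ⟨a, ha⟩ := hH.2.2.1 A hAH
  obtain ⟨b, hb⟩ := hH.2.2.1 B hBH
  have hcA : c ∉ A := fun h => notMem_empty c (dAC ▸ mem_inter.mpr ⟨h, hc⟩)
  have hcB : c ∉ B := fun h => notMem_empty c (dBC ▸ mem_inter.mpr ⟨h, hc⟩)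
  have haB : a ∉ B := fun h => notMem_empty a (dAB ▸ mem_inter.mpr ⟨ha, h⟩)
  have hbA : b ∉ A := fun h => notMem_empty b (dAB ▸ mem_inter.mpr ⟨h, hb⟩)
  have hcAB : c ∉ A ∪ B := fun h => (mem_union.mp h).elim hcA hcB
  have hAδ : A ⊆ δ A := hδenv A hAH
  have hCδ : C ⊆ δ A := (subset_union_right).trans hcontain
  have hABδ : A ∪ B ⊆ δ A := (subset_union_left).trans hcontain
  -- A and B are not singletons
  have hcardA : 1 < A.card := by
    rcases lt_or_ge 1 A.card with h | h
    · exact h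
    · exfalso
      obtain ⟨x, hx⟩ := card_eq_one.mp (le_antisymm h (card_pos.mpr ⟨a, ha⟩))
      have hcx : c ∈ δ A := hCδ hc
      rw [hx, hδsing] at hcx
      exact hcA (by rw [hx, mem_singleton]; exact mem_singleton.mp hcx)
  have hcardB : 1 < B.card := by
    rcases lt_or_ge 1 B.card with h | h
    · exact h
    · exfalso
      obtain ⟨y, hy⟩ := card_eq_one.mp (le_antisymm h (card_pos.mpr ⟨b, hb⟩))
      have hax : a ∈ δ B := hδAB ▸ hAδ ha
      rw [hy, hδsing] at hax
      exact haB (by rw [hy, mem_singleton]; exact mem_singleton.mp hax)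
  -- basic strict inclusions
  have hAsubAB : A ⊂ A ∪ B :=
    subset_union_left.ssubset_of_ne (fun h => hbA (h ▸ mem_union_right A hb))
  have hBsubAB : B ⊂ A ∪ B :=
    subset_union_right.ssubset_of_ne (fun h => haB (h ▸ mem_union_left B ha))
  have hABsubD : A ∪ B ⊂ D :=
    (union_subset hA.2.2.1.subset hB.2.2.1.subset).ssubset_of_ne
      (fun h => hcAB (h ▸ hC.2.2.1.subset hc))
  have hABnotH : A ∪ B ∉ H := fun hmem =>
    hA.2.2.2 (A ∪ B) hmem ⟨hAsubAB, hABsubD⟩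
  -- membership characterisation of the binding
  have hmemb : ∀ E : Finset X, E ∈ binding H A B ↔ (E ∈ H ∧ E ≠ A ∧ E ≠ B) ∨ E = A ∪ B := by
    intro E
    simp only [binding, mem_union, mem_filter, mem_singleton]
    constructor
    · rintro (⟨hE, hcond⟩ | h)
      · refine Or.inl ⟨hE, ?_, ?_⟩
        · rintro rfl; exact hcond ⟨Or.inl rfl, hcardA⟩
        · rintro rfl; exact hcond ⟨Or.inr rfl, hcardB⟩
      · exact Or.inr h
    · rintro (⟨hE, h1, h2⟩ | h)
      · exact Or.inl ⟨hE, fun hcond => hcond.1.elim h1 h2⟩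
      · exact Or.inr h
  have hABinb : A ∪ B ∈ binding H A B := (hmemb _).mpr (Or.inr rfl)
  -- Part 1: LeHP H (binding H A B)
  have part1 : LeHP H (binding H A B) := by
    refine ⟨fun E => if E = A ∨ E = B then A ∪ B else E, ?_, ?_, ?_, ?_⟩
    · intro E hE
      dsimp only
      by_cases h : E = A ∨ E = B
      · rw [if_pos h]; exact hABinb
      · rw [if_neg h]
        push_neg at h
        exact (hmemb E).mpr (Or.inl ⟨hE, h.1, h.2⟩)
    · intro x
      dsimp only
      rw [if_neg]
      rintro (h | h)
      · rw [← h] at hcardA; simp at hcardA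
      · rw [← h] at hcardB; simp at hcardB
    · intro E hE
      dsimp only
      by_cases h : E = A ∨ E = B
      · rw [if_pos h]
        rcases h with rfl | rfl
        · exact subset_union_left
        · exact subset_union_right
      · rw [if_neg h]
    · intro P hP Q hQ hPQ
      dsimp only
      by_cases hp : P = A ∨ P = B <;> by_cases hq : Q = A ∨ Q = B
      · exfalso
        rcases hp with rfl | rfl <;> rcases hq with rfl | rfl
        · exact hPQ.ne rfl
        · exact haB (hPQ.subset ha)
        · exact hbA (hPQ.subset hb)
        · exact hPQ.ne rfl
      · rw [if_pos hp, if_neg hq]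
        have hDQ : D ⊆ Q := by
          rcases hp with rfl | rfl
          · exact maxsub_above hH hA hQ hPQ
          · exact maxsub_above hH hB hQ hPQ
        exact hABsubD.trans_subset hDQ
      · rw [if_neg hp, if_pos hq]
        rcases hq with rfl | rfl
        · exact hPQ.trans_subset subset_union_left
        · exact hPQ.trans_subset subset_union_right
      · rw [if_neg hp, if_neg hq]; exact hPQ
  have hneq1 : H ≠ binding H A B := fun h => hABnotH (h ▸ hABinb)
  -- Part 2: LeHP (binding H A B) H'
  have hABne' : ∀ x : X, ({x} : Finset X) ≠ A ∪ B := by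
    intro x h
    have h1 : (A ∪ B).card ≤ 1 := by rw [← h]; simp
    exact absurd (lt_of_lt_of_le hcardA (card_le_card subset_union_left)) (not_lt.mpr h1)
  have part2 : LeHP (binding H A B) H' := by
    refine ⟨fun E => if E = A ∪ B then δ A else δ E, ?_, ?_, ?_, ?_⟩
    · intro E hE
      dsimp only
      by_cases h : E = A ∪ B
      · rw [if_pos h]; exact hδmem A hAH
      · rw [if_neg h]
        rcases (hmemb E).mp hE with ⟨hEH, -, -⟩ | h'
        · exact hδmem E hEH
        · exact absurd h' h
    · intro x
      dsimp only
      rw [if_neg (hABne' x), hδsing]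
    · intro E hE
      dsimp only
      by_cases h : E = A ∪ B
      · rw [if_pos h, h]; exact hABδ
      · rw [if_neg h]
        rcases (hmemb E).mp hE with ⟨hEH, -, -⟩ | h'
        · exact hδenv E hEH
        · exact absurd h' h
    · intro P hP Q hQ hPQ
      dsimp only
      by_cases hq : Q = A ∪ B
      · subst hq
        rw [if_pos rfl, if_neg hPQ.ne]
        rcases (hmemb P).mp hP with ⟨hPH, hPA, hPB⟩ | h'
        · obtain ⟨p, hp⟩ := hH.2.2.1 P hPH
          rcases mem_union.mp (hPQ.subset hp) with hpA | hpB
          · rcases hier_nested hH hPH hAH ⟨p, mem_inter.mpr ⟨hp, hpA⟩⟩ with h | h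
            · exact hδstrict P hPH A hAH (h.ssubset_of_ne hPA)
            · exfalso
              have hAP : A ⊂ P := h.ssubset_of_ne (fun h' => hPA h'.symm)
              exact hcAB (hPQ.subset ((maxsub_above hH hA hPH hAP) (hC.2.2.1.subset hc)))
          · rcases hier_nested hH hPH hBH ⟨p, mem_inter.mpr ⟨hp, hpB⟩⟩ with h | h
            · exact hδAB ▸ hδstrict P hPH B hBH (h.ssubset_of_ne hPB)
            · exfalso
              have hBP : B ⊂ P := h.ssubset_of_ne (fun h' => hPB h'.symm)
              exact hcAB (hPQ.subset ((maxsub_above hH hB hPH hBP) (hC.2.2.1.subset hc)))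
        · exact absurd h' hPQ.ne
      · rw [if_neg hq]
        rcases (hmemb Q).mp hQ with ⟨hQH, -, -⟩ | h'
        · by_cases hp : P = A ∪ B
          · rw [if_pos hp]
            subst hp
            exact hδstrict A hAH Q hQH (hAsubAB.trans_subset hPQ.subset)
          · rw [if_neg hp]
            rcases (hmemb P).mp hP with ⟨hPH, -, -⟩ | h'
            · exact hδstrict P hPH Q hQH hPQ
            · exact absurd h' hp
        · exact absurd h' hq
  -- Part 3: binding H A B ≠ H'
  have hneq2 : binding H A B ≠ H' := by
    intro hEq
    set S : Finset (Finset X) := H.filter (fun E => D ⊆ E) with hS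
    have hmapsto : ∀ E ∈ S, δ E ∈ S := by
      intro E hE
      rw [hS, mem_filter] at hE ⊢
      obtain ⟨hEH, hDE⟩ := hE
      have hδE : δ E ∈ binding H A B := hEq ▸ hδmem E hEH
      have hDδE : D ⊆ δ E := hDE.trans (hδenv E hEH)
      have hne : δ E ≠ A ∪ B := fun h => hcAB (h ▸ hDδE (hC.2.2.1.subset hc))
      rcases (hmemb _).mp hδE with ⟨h1, -, -⟩ | h'
      · exact ⟨h1, hDδE⟩
      · exact absurd h' hne
    have hDne : D.Nonempty := hH.2.2.1 D hDH
    have hinj : Set.InjOn δ ↑S := by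
      intro E hE F hF hEF
      rw [mem_coe, hS, mem_filter] at hE hF
      by_contra hne
      obtain ⟨d, hd⟩ := hDne
      rcases hier_nested hH hE.1 hF.1 ⟨d, mem_inter.mpr ⟨hE.2 hd, hF.2 hd⟩⟩ with h | h
      · exact (hδstrict E hE.1 F hF.1 (h.ssubset_of_ne hne)).ne hEF
      · exact (hδstrict F hF.1 E hE.1 (h.ssubset_of_ne (Ne.symm hne))).ne hEF.symm
    have himg : S.image δ = S := by
      apply eq_of_subset_of_card_le
      · intro E hE
        obtain ⟨F, hF, rfl⟩ := mem_image.mp hE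
        exact hmapsto F hF
      · rw [card_image_of_injOn hinj]
    have hDS : D ∈ S := by rw [hS, mem_filter]; exact ⟨hDH, Finset.Subset.refl D⟩
    obtain ⟨E, hE, hED⟩ := mem_image.mp (himg ▸ hDS)
    have hEH' : E ∈ H := (mem_filter.mp hE).1
    have hDE : D ⊆ E := (mem_filter.mp hE).2
    have hED' : E = D := Finset.Subset.antisymm (hED ▸ hδenv E hEH') hDE
    have hδD : δ D = D := hED' ▸ hED
    have hδAD : δ A ⊂ D := hδD ▸ hδstrict A hAH D hDH hA.2.2.1
    have hδAH : δ A ∈ H := by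
      have hδAb : δ A ∈ binding H A B := hEq ▸ hδmem A hAH
      have hne : δ A ≠ A ∪ B := fun h => hcAB (h ▸ hCδ hc)
      rcases (hmemb _).mp hδAb with ⟨h1, -, -⟩ | h'
      · exact h1
      · exact absurd h' hne
    have hAδA : A ⊂ δ A := hAδ.ssubset_of_ne (fun h => hcA (h ▸ hCδ hc))
    exact hA.2.2.2 (δ A) hδAH ⟨hAδA, hδAD⟩
  exact ⟨⟨part1, hneq1⟩, ⟨part2, hneq2⟩⟩
end

section
/- If T and T' are binary rooted phylogenetic trees on X (every cluster that is not a singleton has exactly two inclusion-maximal proper subclusters in the hierarchy) and there exists a hierarchy-preserving map from H(T) to H(T'), then H(T) = H(T'). Consequently, the ≤_HP-maximal elements of RP(X) are exactly the binary trees. -/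
open Finset

variable {X : Type*} [DecidableEq X] [Fintype X]

/-- A hierarchy is binary if every non-singleton cluster has exactly two inclusion-maximal
proper subclusters. -/
def IsBinary (H : Finset (Finset X)) : Prop :=
  IsHierarchy H ∧ ∀ D ∈ H, 1 < D.card →
    ∃ A B : Finset X, A ≠ B ∧ IsMaxSub H A D ∧ IsMaxSub H B D ∧
      ∀ C : Finset X, IsMaxSub H C D → C = A ∨ C = B


lemma exists_child {H : Finset (Finset X)} (hH : IsHierarchy H) {D : Finset X}
    (hD : D ∈ H) (hcard : 1 < D.card) {x : X} (hx : x ∈ D) :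
    ∃ M, IsMaxSub H M D ∧ x ∈ M := by
  classical
  set S := H.filter (fun M => x ∈ M ∧ M ⊂ D) with hS
  have hxS : ({x} : Finset X) ∈ S := by
    refine Finset.mem_filter.2 ⟨hH.2.1 x, Finset.mem_singleton_self x, ?_⟩
    refine Finset.ssubset_iff_subset_ne.2 ⟨Finset.singleton_subset_iff.2 hx, ?_⟩
    intro h
    rw [← h] at hcard
    simp at hcard
  obtain ⟨M, hMS, hmax⟩ := S.exists_max_image Finset.card ⟨_, hxS⟩
  rw [hS, Finset.mem_filter] at hMS
  refine ⟨M, ⟨hMS.1, hD, hMS.2.2, ?_⟩, hMS.2.1⟩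
  intro C hC ⟨h1, h2⟩
  have hCS : C ∈ S := Finset.mem_filter.2 ⟨hC, h1.1 hMS.2.1, h2⟩
  exact absurd (hmax C hCS) (not_le.2 (Finset.card_lt_card h1))

lemma exists_parent {H : Finset (Finset X)} (hH : IsHierarchy H) {A : Finset X}
    (hA : A ∈ H) (hAu : A ≠ Finset.univ) : ∃ D, IsMaxSub H A D := by
  classical
  set S := H.filter (fun C => A ⊂ C) with hS
  have huS : (Finset.univ : Finset X) ∈ S :=
    Finset.mem_filter.2 ⟨hH.1, Finset.ssubset_iff_subset_ne.2 ⟨Finset.subset_univ A, hAu⟩⟩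
  obtain ⟨D, hDS, hmin⟩ := S.exists_min_image Finset.card ⟨_, huS⟩
  rw [hS, Finset.mem_filter] at hDS
  refine ⟨D, hA, hDS.1, hDS.2, ?_⟩
  intro C hC ⟨h1, h2⟩
  have hCS : C ∈ S := Finset.mem_filter.2 ⟨hC, h1⟩
  exact absurd (hmin C hCS) (not_le.2 (Finset.card_lt_card h2))

lemma maxsub_disjoint {H : Finset (Finset X)} (hH : IsHierarchy H) {A B D : Finset X}
    (hA : IsMaxSub H A D) (hB : IsMaxSub H B D) (hne : A ≠ B) : A ∩ B = ∅ := by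
  rcases hH.2.2.2 A hA.1 B hB.1 with h | h | h
  · exact h
  · exact absurd ⟨Finset.ssubset_iff_subset_ne.2 ⟨h, hne⟩, hB.2.2.1⟩ (hA.2.2.2 B hB.1)
  · exact absurd ⟨Finset.ssubset_iff_subset_ne.2 ⟨h, hne.symm⟩, hA.2.2.1⟩ (hB.2.2.2 A hA.1)

lemma children_union {H : Finset (Finset X)} (hH : IsHierarchy H) {A B D : Finset X}
    (hD : D ∈ H) (hcard : 1 < D.card)
    (hA : IsMaxSub H A D) (hB : IsMaxSub H B D)
    (huniq : ∀ C : Finset X, IsMaxSub H C D → C = A ∨ C = B) : A ∪ B = D := by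
  apply Finset.Subset.antisymm (Finset.union_subset hA.2.2.1.1 hB.2.2.1.1)
  intro x hx
  obtain ⟨M, hM, hxM⟩ := exists_child hH hD hcard hx
  rcases huniq M hM with rfl | rfl
  · exact Finset.mem_union_left _ hxM
  · exact Finset.mem_union_right _ hxM

lemma subset_binary_eq {H H' : Finset (Finset X)} (hH : IsBinary H)
    (hH' : IsHierarchy H') (hsub : H ⊆ H') : H' = H := by
  classical
  apply Finset.Subset.antisymm _ hsub
  intro E hE
  by_contra hEH
  have hEne : E.Nonempty := hH'.2.2.1 E hE
  have hEu : E ≠ Finset.univ := fun h => hEH (h ▸ hH.1.1)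
  set S := H.filter (fun C => E ⊂ C) with hS
  have huS : (Finset.univ : Finset X) ∈ S :=
    Finset.mem_filter.2 ⟨hH.1.1, Finset.ssubset_iff_subset_ne.2 ⟨Finset.subset_univ E, hEu⟩⟩
  obtain ⟨D, hDS, hmin⟩ := S.exists_min_image Finset.card ⟨_, huS⟩
  rw [hS, Finset.mem_filter] at hDS
  obtain ⟨hD, hED⟩ := hDS
  have hcard : 1 < D.card := lt_of_le_of_lt (Finset.card_pos.2 hEne) (Finset.card_lt_card hED)
  obtain ⟨A, B, hAB, hA, hB, huniq⟩ := hH.2 D hD hcard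
  have hABD : A ∪ B = D := children_union hH.1 hD hcard hA hB huniq
  -- E vs A, E vs B in H'
  have key : ∀ {M : Finset X}, IsMaxSub H M D → M ⊆ E ∨ E ∩ M = ∅ := by
    intro M hM
    rcases hH'.2.2.2 E hE M (hsub hM.1) with h | h | h
    · right; exact h
    · exfalso
      have hEM : E ⊂ M := Finset.ssubset_iff_subset_ne.2 ⟨h, fun he => hEH (he ▸ hM.1)⟩
      have : M ∈ S := Finset.mem_filter.2 ⟨hM.1, hEM⟩
      exact absurd (hmin M this) (not_le.2 (Finset.card_lt_card hM.2.2.1))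
    · left; exact h
  rcases key hA with hAE | hAE <;> rcases key hB with hBE | hBE
  · exact absurd (hABD ▸ Finset.union_subset hAE hBE : D ⊆ E) (fun h => (hED.2 h).elim)
  · -- A ⊆ E, E ∩ B = ∅ : E = A
    apply hEH
    have : E ⊆ A := by
      intro x hx
      have hxD : x ∈ D := hED.1 hx
      rw [← hABD] at hxD
      rcases Finset.mem_union.1 hxD with h | h
      · exact h
      · exact absurd (Finset.mem_inter.2 ⟨hx, h⟩) (by simp [hBE])
    rw [Finset.Subset.antisymm this hAE]; exact hA.1
  · apply hEH
    have : E ⊆ B := by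
      intro x hx
      have hxD : x ∈ D := hED.1 hx
      rw [← hABD] at hxD
      rcases Finset.mem_union.1 hxD with h | h
      · exact absurd (Finset.mem_inter.2 ⟨hx, h⟩) (by simp [hAE])
      · exact h
    rw [Finset.Subset.antisymm this hBE]; exact hB.1
  · obtain ⟨x, hx⟩ := hEne
    have hxD : x ∈ D := hED.1 hx
    rw [← hABD] at hxD
    rcases Finset.mem_union.1 hxD with h | h
    · exact absurd (Finset.mem_inter.2 ⟨hx, h⟩) (by simp [hAE])
    · exact absurd (Finset.mem_inter.2 ⟨hx, h⟩) (by simp [hBE])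

lemma child_cover {H' : Finset (Finset X)} (hH' : IsHierarchy H') {P Q D E : Finset X}
    (hP : IsMaxSub H' P D) (hQ : IsMaxSub H' Q D) (hPQD : P ∪ Q = D)
    (hE : E ∈ H') (hED : E ⊂ D) : E ⊆ P ∨ E ⊆ Q := by
  have hcase : ∀ {M : Finset X}, IsMaxSub H' M D → E ⊆ M ∨ E ∩ M = ∅ := by
    intro M hM
    rcases hH'.2.2.2 E hE M hM.1 with h | h | h
    · right; exact h
    · left; exact h
    · left
      rcases h.eq_or_ssubset with h' | h'
      · exact h'.ge
      · exact absurd ⟨h', hED⟩ (hM.2.2.2 E hE)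
  rcases hcase hP with h1 | h1
  · exact Or.inl h1
  rcases hcase hQ with h2 | h2
  · exact Or.inr h2
  exfalso
  obtain ⟨x, hx⟩ := hH'.2.2.1 E hE
  have hxD : x ∈ D := hED.1 hx
  rw [← hPQD] at hxD
  rcases Finset.mem_union.1 hxD with h | h
  · exact absurd (Finset.mem_inter.2 ⟨hx, h⟩) (by simp [h1])
  · exact absurd (Finset.mem_inter.2 ⟨hx, h⟩) (by simp [h2])

omit [Fintype X] in
lemma fix_child {δ : Finset X → Finset X} {P Q C S D : Finset X}
    (hPQ : P ∩ Q = ∅) (hCSD : C ∪ S = D)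
    (hCd : C ⊆ δ C) (hSd : S ⊆ δ S)
    (hdCP : δ C ⊆ P) (hdS : δ S ⊆ P ∨ δ S ⊆ Q) (hPD : P ⊂ D) : δ C = C := by
  rcases hdS with h | h
  · exfalso
    have : D ⊆ P := by
      rw [← hCSD]
      exact Finset.union_subset (hCd.trans hdCP) (hSd.trans h)
    exact hPD.2 this
  · have hPC : P ⊆ C := by
      intro x hx
      have hxD : x ∈ D := hPD.1 hx
      rw [← hCSD] at hxD
      rcases Finset.mem_union.1 hxD with h' | h'
      · exact h'
      · exact absurd (Finset.mem_inter.2 ⟨hx, h (hSd h')⟩) (by simp [hPQ])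
    exact Finset.Subset.antisymm (hdCP.trans hPC) hCd

lemma hp_fixes {H H' : Finset (Finset X)} {δ : Finset X → Finset X}
    (hH : IsBinary H) (hH' : IsBinary H') (hδ : IsHPMap H H' δ) :
    ∀ C ∈ H, δ C = C ∧ C ∈ H' := by
  classical
  obtain ⟨hmem, hsing, henv, hstrict⟩ := hδ
  have huniv : δ (Finset.univ : Finset X) = Finset.univ ∧ (Finset.univ : Finset X) ∈ H' := by
    have h1 : δ (Finset.univ : Finset X) = Finset.univ :=
      Finset.univ_subset_iff.1 (henv _ hH.1.1)
    exact ⟨h1, hH'.1.1⟩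
  suffices h : ∀ m : ℕ, ∀ C ∈ H, Fintype.card X - C.card ≤ m → δ C = C ∧ C ∈ H' by
    exact fun C hC => h _ C hC le_rfl
  intro m
  induction m with
  | zero =>
    intro C hC hm
    have hCu : C = Finset.univ := by
      apply Finset.eq_univ_of_card
      have := Finset.card_le_univ C
      omega
    subst hCu; exact huniv
  | succ m ih =>
    intro C hC hm
    by_cases hCu : C = Finset.univ
    · subst hCu; exact huniv
    obtain ⟨D, hCD⟩ := exists_parent hH.1 hC hCu
    have hD : D ∈ H := hCD.2.1
    have hcards : C.card < D.card := Finset.card_lt_card hCD.2.2.1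
    have hClt : C.card < Fintype.card X := by
      have h1 := Finset.card_le_univ C
      rcases lt_or_eq_of_le h1 with h | h
      · simpa using h
      · exfalso; exact hCu (Finset.eq_univ_of_card C (by simpa using h))
    have hDm : Fintype.card X - D.card ≤ m := by omega
    obtain ⟨hdD, hDH'⟩ := ih D hD hDm
    have hDcard : 1 < D.card := by
      have : 0 < C.card := Finset.card_pos.2 (hH.1.2.2.1 C hC)
      omega
    -- children of D in H
    obtain ⟨A, B, hAB, hA, hB, huniq⟩ := hH.2 D hD hDcard
    have hABd : A ∩ B = ∅ := maxsub_disjoint hH.1 hA hB hAB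
    have hABD : A ∪ B = D := children_union hH.1 hD hDcard hA hB huniq
    -- sibling S of C
    obtain ⟨S, hS : S ∈ H, hCSD : C ∪ S = D, hSD : S ⊂ D⟩ :
        ∃ S, S ∈ H ∧ C ∪ S = D ∧ S ⊂ D := by
      rcases huniq C hCD with rfl | rfl
      · exact ⟨B, hB.1, hABD, hB.2.2.1⟩
      · exact ⟨A, hA.1, by rw [Finset.union_comm]; exact hABD, hA.2.2.1⟩
    -- children of D in H'
    obtain ⟨P, Q, hPQ, hP, hQ, _⟩ := hH'.2 D hDH' hDcard
    have hPQd : P ∩ Q = ∅ := maxsub_disjoint hH'.1 hP hQ hPQ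
    have hPQD : P ∪ Q = D := children_union hH'.1 hDH' hDcard hP hQ ‹_›
    have hdC : δ C ∈ H' := hmem C hC
    have hdS : δ S ∈ H' := hmem S hS
    have hdCD : δ C ⊂ D := by rw [← hdD]; exact hstrict C hC D hD hCD.2.2.1
    have hdSD : δ S ⊂ D := by rw [← hdD]; exact hstrict S hS D hD hSD
    have hcovC := child_cover hH'.1 hP hQ hPQD hdC hdCD
    have hcovS := child_cover hH'.1 hP hQ hPQD hdS hdSD
    have hfix : δ C = C := by
      rcases hcovC with h | h
      · exact fix_child hPQd hCSD (henv C hC) (henv S hS) h hcovS hP.2.2.1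
      · exact fix_child (by rw [Finset.inter_comm]; exact hPQd) hCSD (henv C hC) (henv S hS) h
          hcovS.symm hQ.2.2.1
    exact ⟨hfix, hfix ▸ hdC⟩

omit [Fintype X] in
lemma inter_empty_notMem {U V : Finset X} (h : U ∩ V = ∅) {a : X} (ha : a ∈ U)
    (hb : a ∈ V) : False := by
  have : a ∈ U ∩ V := Finset.mem_inter.2 ⟨ha, hb⟩
  simp [h] at this

lemma extend_step {H : Finset (Finset X)} (hH : IsHierarchy H) (hnb : ¬ IsBinary H) :
    ∃ E, E ∉ H ∧ IsHierarchy (insert E H) := by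
  classical
  rw [IsBinary, not_and_or] at hnb
  rcases hnb with h | h
  · exact absurd hH h
  push_neg at h
  obtain ⟨D, hD, hDcard, hbad⟩ := h
  -- get two distinct children A, B
  obtain ⟨x, hx⟩ := hH.2.2.1 D hD
  obtain ⟨A, hA, hxA⟩ := exists_child hH hD hDcard hx
  obtain ⟨y, hy, hyA⟩ := Finset.exists_of_ssubset hA.2.2.1
  obtain ⟨B, hB, hyB⟩ := exists_child hH hD hDcard hy
  have hAB : A ≠ B := fun h => hyA (h ▸ hyB)
  -- get a third child
  obtain ⟨C₀, hC₀, hC₀A, hC₀B⟩ := hbad A B hAB hA hB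
  have hdAB : A ∩ B = ∅ := maxsub_disjoint hH hA hB hAB
  have hdAC : A ∩ C₀ = ∅ := maxsub_disjoint hH hA hC₀ (Ne.symm hC₀A)
  have hdBC : B ∩ C₀ = ∅ := maxsub_disjoint hH hB hC₀ (Ne.symm hC₀B)
  have hAne : A.Nonempty := hH.2.2.1 A hA.1
  have hBne : B.Nonempty := hH.2.2.1 B hB.1
  have hC₀ne : C₀.Nonempty := hH.2.2.1 C₀ hC₀.1
  set E := A ∪ B with hE
  have hAE : A ⊂ E := by
    refine Finset.ssubset_iff_subset_ne.2 ⟨Finset.subset_union_left, ?_⟩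
    intro h
    obtain ⟨b, hb⟩ := hBne
    have : b ∈ A := h ▸ Finset.mem_union_right A hb
    exact absurd (Finset.mem_inter.2 ⟨this, hb⟩) (by simp [hdAB])
  have hED : E ⊂ D := by
    refine Finset.ssubset_iff_subset_ne.2 ⟨Finset.union_subset hA.2.2.1.1 hB.2.2.1.1, ?_⟩
    intro h
    obtain ⟨c, hc⟩ := hC₀ne
    have hcD : c ∈ D := hC₀.2.2.1.1 hc
    rw [← h] at hcD
    rcases Finset.mem_union.1 hcD with h' | h'
    · exact absurd (Finset.mem_inter.2 ⟨h', hc⟩) (by simp [hdAC])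
    · exact absurd (Finset.mem_inter.2 ⟨h', hc⟩) (by simp [hdBC])
  have hEH : E ∉ H := fun h => hA.2.2.2 E h ⟨hAE, hED⟩
  refine ⟨E, hEH, ?_, ?_, ?_, ?_⟩
  · exact Finset.mem_insert_of_mem hH.1
  · exact fun z => Finset.mem_insert_of_mem (hH.2.1 z)
  · intro F hF
    rcases Finset.mem_insert.1 hF with rfl | hF
    · exact hAne.mono Finset.subset_union_left
    · exact hH.2.2.1 F hF
  · -- laminarity
    have hkey : ∀ C ∈ H, C ∩ E = ∅ ∨ C ⊆ E ∨ E ⊆ C := by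
      intro C hC
      rcases hH.2.2.2 C hC A hA.1 with h1 | h1 | h1 <;>
        rcases hH.2.2.2 C hC B hB.1 with h2 | h2 | h2
      · left
        rw [hE, Finset.inter_union_distrib_left, h1, h2, Finset.union_empty]
      · right; left; exact h2.trans Finset.subset_union_right
      · -- C ∩ A = ∅, B ⊆ C : impossible unless C = B
        rcases eq_or_ne C B with rfl | hne
        · right; left; exact Finset.subset_union_right
        exfalso
        have hBC : B ⊂ C := Finset.ssubset_iff_subset_ne.2 ⟨h2, Ne.symm hne⟩
        rcases hH.2.2.2 C hC D hD with h3 | h3 | h3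
        · obtain ⟨b, hb⟩ := hBne
          exact absurd (Finset.mem_inter.2 ⟨h2 hb, hB.2.2.1.1 hb⟩) (by simp [h3])
        · have hCD : C ⊂ D := Finset.ssubset_iff_subset_ne.2 ⟨h3, ?_⟩
          · exact hB.2.2.2 C hC ⟨hBC, hCD⟩
          · rintro rfl
            obtain ⟨a, ha⟩ := hAne
            exact inter_empty_notMem h1 (hA.2.2.1.1 ha) ha
        · obtain ⟨a, ha⟩ := hAne
          exact inter_empty_notMem h1 (h3 (hA.2.2.1.1 ha)) ha
      · right; left; exact h1.trans Finset.subset_union_left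
      · right; left; exact h1.trans Finset.subset_union_left
      · right; left; exact h1.trans Finset.subset_union_left
      · -- A ⊆ C, C ∩ B = ∅ : C = A or impossible
        rcases eq_or_ne C A with rfl | hne
        · right; left; exact Finset.subset_union_left
        exfalso
        have hAC : A ⊂ C := Finset.ssubset_iff_subset_ne.2 ⟨h1, Ne.symm hne⟩
        rcases hH.2.2.2 C hC D hD with h3 | h3 | h3
        · obtain ⟨a, ha⟩ := hAne
          exact absurd (Finset.mem_inter.2 ⟨h1 ha, hA.2.2.1.1 ha⟩) (by simp [h3])
        · have hCD : C ⊂ D := Finset.ssubset_iff_subset_ne.2 ⟨h3, ?_⟩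
          · exact hA.2.2.2 C hC ⟨hAC, hCD⟩
          · rintro rfl
            obtain ⟨b, hb⟩ := hBne
            exact inter_empty_notMem h2 (hB.2.2.1.1 hb) hb
        · obtain ⟨b, hb⟩ := hBne
          exact inter_empty_notMem h2 (h3 (hB.2.2.1.1 hb)) hb
      · right; left; exact h2.trans Finset.subset_union_right
      · right; right; exact Finset.union_subset h1 h2
    intro F hF G hG
    rcases Finset.mem_insert.1 hF with rfl | hF' <;> rcases Finset.mem_insert.1 hG with rfl | hG'
    · right; left; exact Finset.Subset.refl _
    · rcases hkey G hG' with h | h | h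
      · left; rw [Finset.inter_comm]; exact h
      · right; right; exact h
      · right; left; exact h
    · rcases hkey F hF' with h | h | h
      · left; exact h
      · right; left; exact h
      · right; right; exact h
    · exact hH.2.2.2 F hF' G hG'

lemma extend_binary {H : Finset (Finset X)} (hH : IsHierarchy H) :
    ∃ Hb, H ⊆ Hb ∧ IsBinary Hb := by
  classical
  set N := (Finset.univ : Finset X).powerset.card with hN
  suffices h : ∀ k, ∀ H : Finset (Finset X), IsHierarchy H → N - H.card ≤ k →
      ∃ Hb, H ⊆ Hb ∧ IsBinary Hb by
    exact h (N - H.card) H hH le_rfl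
  intro k
  induction k with
  | zero =>
    intro H hH hk
    by_cases hb : IsBinary H
    · exact ⟨H, Finset.Subset.refl _, hb⟩
    exfalso
    obtain ⟨E, hEH, hins⟩ := extend_step hH hb
    have hsub : insert E H ⊆ (Finset.univ : Finset X).powerset := by
      intro F _; exact Finset.mem_powerset.2 (Finset.subset_univ F)
    have h1 : (insert E H).card = H.card + 1 := Finset.card_insert_of_notMem hEH
    have h2 : (insert E H).card ≤ N := Finset.card_le_card hsub
    omega
  | succ k ih =>
    intro H hH hk
    by_cases hb : IsBinary H
    · exact ⟨H, Finset.Subset.refl _, hb⟩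
    obtain ⟨E, hEH, hins⟩ := extend_step hH hb
    have hsub : insert E H ⊆ (Finset.univ : Finset X).powerset := by
      intro F _; exact Finset.mem_powerset.2 (Finset.subset_univ F)
    have h1 : (insert E H).card = H.card + 1 := Finset.card_insert_of_notMem hEH
    have h2 : (insert E H).card ≤ N := Finset.card_le_card hsub
    obtain ⟨Hb, hsub', hb'⟩ := ih (insert E H) hins (by omega)
    exact ⟨Hb, (Finset.subset_insert E H).trans hsub', hb'⟩

/-- a hierarchy-preserving map between binary trees forces equality;
consequently the `≤_HP`-maximal elements of `RP(X)` are exactly the binary trees. -/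
theorem binary_maximal :
    (∀ H H' : Finset (Finset X), IsBinary H → IsBinary H' → LeHP H H' → H = H') ∧
    (∀ H : Finset (Finset X), IsHierarchy H →
      ((∀ H' : Finset (Finset X), IsHierarchy H' → LeHP H H' → H' = H) ↔ IsBinary H)) := by
  have main : ∀ H H' : Finset (Finset X), IsBinary H → IsBinary H' → LeHP H H' → H = H' := by
    intro H H' hH hH' ⟨δ, hδ⟩
    have hfix := hp_fixes hH hH' hδ
    have hsub : H ⊆ H' := fun C hC => (hfix C hC).2
    exact (subset_binary_eq hH hH'.1 hsub).symm
  refine ⟨main, ?_⟩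
  intro H hH
  constructor
  · -- maximal → binary
    intro hmax
    by_contra hb
    obtain ⟨E, hEH, hins⟩ := extend_step hH hb
    have hle : LeHP H (insert E H) := by
      refine ⟨id, fun A hA => Finset.mem_insert_of_mem hA, fun x => rfl,
        fun A _ => Finset.Subset.refl A, fun A _ B _ h => h⟩
    have := hmax (insert E H) hins hle
    exact hEH (this ▸ Finset.mem_insert_self E H)
  · -- binary → maximal
    intro hb H' hH' ⟨δ, hδ⟩
    obtain ⟨Hb, hsub, hbb⟩ := extend_binary hH'
    have hδ' : IsHPMap H Hb δ :=
      ⟨fun A hA => hsub (hδ.1 A hA), hδ.2.1, hδ.2.2.1, hδ.2.2.2⟩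
    have hfix := hp_fixes hb hbb hδ'
    have hsub2 : H ⊆ H' := by
      intro C hC
      have h1 := (hfix C hC).1
      have h2 := hδ.1 C hC
      rwa [h1] at h2
    exact subset_binary_eq hb hH' hsub2
end

section
/- Define the rank f(T) = Σ_{A ∈ P(T)} (|A| − 1), where P(T) is the set of proper clusters of T (clusters other than X and singletons). If T <_HP T' and T' covers T in the partial order ≤_HP (i.e., T' is obtained from T by a single binding of two inclusion-maximal subclusters of a common cluster), then f(T') = f(T) + 1. -/
open Finset

variable {X : Type*} [DecidableEq X] [Fintype X]

/-- The proper clusters of a hierarchy: members that are neither `X` nor singletons. -/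
def properClusters (H : Finset (Finset X)) : Finset (Finset X) :=
  H.filter fun A => A ≠ Finset.univ ∧ 1 < A.card

/-- The rank of a tree/hierarchy: `f(T) = ∑_{A ∈ P(T)} (|A| - 1)`. -/
def rankHP (H : Finset (Finset X)) : ℕ :=
  ∑ A ∈ properClusters H, (A.card - 1)

/-- a single binding (i.e. a Hasse covering step of `≤_HP`) increases the
rank by exactly one. -/
theorem rank_binding (H : Finset (Finset X)) (A B D : Finset X)
    (hH : IsHierarchy H) (hA : IsMaxSub H A D) (hB : IsMaxSub H B D)
    (hAB : A ≠ B) (hU : A ∪ B ≠ D) :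
    rankHP (binding H A B) = rankHP H + 1 := by
  obtain ⟨huniv, hsing, hne, hpw⟩ := hH
  obtain ⟨hAH, hDH, hAD, hAmax⟩ := hA
  obtain ⟨hBH, -, hBD, hBmax⟩ := hB
  have hAne : A.Nonempty := hne A hAH
  have hBne : B.Nonempty := hne B hBH
  have hAc : 1 ≤ A.card := Finset.card_pos.mpr hAne
  have hBc : 1 ≤ B.card := Finset.card_pos.mpr hBne
  have hdisj : Disjoint A B := by
    rcases hpw A hAH B hBH with h | h | h
    · exact Finset.disjoint_iff_inter_eq_empty.mpr h
    · exact absurd ⟨h.ssubset_of_ne hAB, hBD⟩ (hAmax B hBH)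
    · exact absurd ⟨h.ssubset_of_ne (Ne.symm hAB), hAD⟩ (hBmax A hAH)
  have cardAB : (A ∪ B).card = A.card + B.card := Finset.card_union_of_disjoint hdisj
  have hABsubD : A ∪ B ⊂ D :=
    (Finset.union_subset hAD.subset hBD.subset).ssubset_of_ne hU
  have hABssA : A ⊂ A ∪ B := by
    refine Finset.subset_union_left.ssubset_of_ne fun hEq => ?_
    have : B = ∅ := Finset.subset_empty.mp
      (fun b hb => absurd hb (by
        have : b ∈ A := hEq ▸ Finset.mem_union_right A hb
        exact fun h => Finset.disjoint_left.mp hdisj this h))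
    exact hBne.ne_empty this
  have hABnotH : A ∪ B ∉ H := fun h => hAmax (A ∪ B) h ⟨hABssA, hABsubD⟩
  have hAneU : A ≠ Finset.univ := (hAD.trans_subset (Finset.subset_univ D)).ne
  have hBneU : B ≠ Finset.univ := (hBD.trans_subset (Finset.subset_univ D)).ne
  have hABneU : A ∪ B ≠ Finset.univ := (hABsubD.trans_subset (Finset.subset_univ D)).ne
  have hABnotP : A ∪ B ∉ properClusters H := fun h => hABnotH (Finset.mem_filter.mp h).1
  have hset : properClusters (binding H A B) =
      insert (A ∪ B) (((properClusters H).erase A).erase B) := by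
    ext C
    simp only [properClusters, binding, Finset.mem_filter, Finset.mem_union,
      Finset.mem_singleton, Finset.mem_insert, Finset.mem_erase]
    constructor
    · rintro ⟨hC | hC, hprop⟩
      · right
        refine ⟨?_, ?_, hC.1, hprop⟩
        · rintro rfl; exact hC.2 ⟨Or.inr rfl, hprop.2⟩
        · rintro rfl; exact hC.2 ⟨Or.inl rfl, hprop.2⟩
      · exact Or.inl hC
    · rintro (rfl | ⟨hCB, hCA, hCH, hprop⟩)
      · exact ⟨Or.inr rfl, hABneU, by rw [cardAB]; omega⟩
      · exact ⟨Or.inl ⟨hCH, fun h => h.1.elim hCA hCB⟩, hprop⟩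
  have hnot : A ∪ B ∉ ((properClusters H).erase A).erase B :=
    fun h => hABnotP (Finset.mem_of_mem_erase (Finset.mem_of_mem_erase h))
  rw [rankHP, hset, Finset.sum_insert hnot, cardAB]
  by_cases h1 : 1 < A.card
  · have hAP : A ∈ properClusters H := Finset.mem_filter.mpr ⟨hAH, hAneU, h1⟩
    have e1 := Finset.add_sum_erase (properClusters H) (fun C => C.card - 1) hAP
    by_cases h2 : 1 < B.card
    · have hBP : B ∈ (properClusters H).erase A :=
        Finset.mem_erase.mpr ⟨Ne.symm hAB, Finset.mem_filter.mpr ⟨hBH, hBneU, h2⟩⟩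
      have e2 := Finset.add_sum_erase ((properClusters H).erase A)
        (fun C => C.card - 1) hBP
      simp only [rankHP]
      beta_reduce at *
      omega
    · have hBnotP : B ∉ (properClusters H).erase A := fun h =>
        h2 (Finset.mem_filter.mp (Finset.mem_of_mem_erase h)).2.2
      rw [Finset.erase_eq_of_notMem hBnotP]
      simp only [rankHP]
      beta_reduce at *
      omega
  · have hAnotP : A ∉ properClusters H := fun h => h1 (Finset.mem_filter.mp h).2.2
    rw [Finset.erase_eq_of_notMem hAnotP]
    by_cases h2 : 1 < B.card
    · have hBP : B ∈ properClusters H := Finset.mem_filter.mpr ⟨hBH, hBneU, h2⟩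
      have e2 := Finset.add_sum_erase (properClusters H) (fun C => C.card - 1) hBP
      simp only [rankHP]
      beta_reduce at *
      omega
    · have hBnotP : B ∉ properClusters H := fun h => h2 (Finset.mem_filter.mp h).2.2
      rw [Finset.erase_eq_of_notMem hBnotP]
      simp only [rankHP]
      beta_reduce at *
      omega
end

section
/- For |X| = n and any rooted phylogenetic tree T on X, the rank satisfies 0 ≤ f(T) ≤ (n−1)(n−2)/2, where f(T) = Σ_{A ∈ P(T)} (|A| − 1). The lower bound is attained exactly by the star tree, and the upper bound is attained by the caterpillar trees, whose proper clusters form a chain of sizes 2, 3, …, n−1. -/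
open Finset

variable {X : Type*} [DecidableEq X] [Fintype X]

/-- The star hierarchy: just `X` and the singletons. -/
def starH (X : Type*) [DecidableEq X] [Fintype X] : Finset (Finset X) :=
  insert Finset.univ ((Finset.univ : Finset X).image fun x => ({x} : Finset X))

/-- A caterpillar tree: its proper clusters form a strictly increasing chain
`C₂ ⊂ C₃ ⊂ ⋯ ⊂ C_{n-1}` with `|C_k| = k`. -/
def IsCaterpillar (H : Finset (Finset X)) : Prop :=
  IsHierarchy H ∧ ∃ C : ℕ → Finset X,
    (∀ k, 2 ≤ k → k ≤ Fintype.card X - 1 → (C k).card = k) ∧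
    (∀ k l, 2 ≤ k → k < l → l ≤ Fintype.card X - 1 → C k ⊂ C l) ∧
    properClusters H = (Finset.Icc 2 (Fintype.card X - 1)).image C

lemma choose_two_succ' (t : ℕ) : (t + 1).choose 2 = t + t.choose 2 := by
  simp [Nat.choose_succ_succ, Nat.choose_one_right]

lemma two_mul_choose_two' (n : ℕ) : n.choose 2 * 2 = n * (n - 1) := by
  induction n with
  | zero => rfl
  | succ n ih =>
    rw [choose_two_succ']
    cases n with
    | zero => rfl
    | succ m =>
      simp only [Nat.add_sub_cancel] at *
      nlinarith [ih]

lemma choose_add_le' (a b : ℕ) (ha : 1 ≤ a) (hb : 1 ≤ b) :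
    a.choose 2 + b.choose 2 ≤ (a + b - 1).choose 2 := by
  have h := two_mul_choose_two' a
  have h2 := two_mul_choose_two' b
  have h3 := two_mul_choose_two' (a + b - 1)
  obtain ⟨a', rfl⟩ := Nat.exists_eq_add_of_le ha
  obtain ⟨b', rfl⟩ := Nat.exists_eq_add_of_le hb
  have e1 : 1 + a' - 1 = a' := by omega
  have e2 : 1 + b' - 1 = b' := by omega
  have e3 : 1 + a' + (1 + b') - 1 = a' + b' + 1 := by omega
  have e4 : a' + b' + 1 - 1 = a' + b' := by omega
  refine Nat.le_of_mul_le_mul_right ?_ (by norm_num : 0 < 2)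
  rw [Nat.add_mul, h, h2, h3, e1, e2, e3, e4]
  nlinarith

lemma sum_Icc_pred_eq_choose (m : ℕ) : ∑ k ∈ Finset.Icc 2 m, (k - 1) = m.choose 2 := by
  induction m with
  | zero => simp
  | succ m ih =>
    cases m with
    | zero => decide
    | succ t =>
      rw [Finset.sum_Icc_succ_top (by omega), ih]
      have := choose_two_succ' (t + 1)
      omega

lemma laminar_bound (N : ℕ) : ∀ P : Finset (Finset X), P.card ≤ N →
    (∀ A ∈ P, ∀ B ∈ P, A ∩ B = ∅ ∨ A ⊆ B ∨ B ⊆ A) →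
    (∀ A ∈ P, 2 ≤ A.card) →
    ∀ S : Finset X,
      ((∀ A ∈ P, A ⊂ S) → ∑ A ∈ P, (A.card - 1) ≤ (S.card - 1).choose 2) ∧
      ((∀ A ∈ P, A ⊆ S) → ∑ A ∈ P, (A.card - 1) ≤ S.card.choose 2) := by
  induction N with
  | zero =>
    intro P hP _ _ S
    have : P = ∅ := Finset.card_eq_zero.mp (Nat.le_zero.mp hP)
    subst this; simp
  | succ N ih =>
    intro P hP hlam h2 S
    have hstrict : (∀ A ∈ P, A ⊂ S) → ∑ A ∈ P, (A.card - 1) ≤ (S.card - 1).choose 2 := by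
      intro hsub
      rcases P.eq_empty_or_nonempty with rfl | hne
      · simp
      obtain ⟨M, hM, hmax⟩ := P.exists_max_image Finset.card hne
      have hMS : M ⊂ S := hsub M hM
      have hm2 : 2 ≤ M.card := h2 M hM
      have hms : M.card < S.card := Finset.card_lt_card hMS
      by_cases hall : ∀ A ∈ P, A ⊆ M
      · have herase : ∀ A ∈ P.erase M, A ⊂ M := fun A hA =>
          lt_of_le_of_ne (hall A (Finset.mem_of_mem_erase hA)) (Finset.ne_of_mem_erase hA)
        have hcard : (P.erase M).card ≤ N := by
          have := Finset.card_erase_of_mem hM; omega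
        have hbd := (ih (P.erase M) hcard
          (fun A hA B hB => hlam A (Finset.mem_of_mem_erase hA) B (Finset.mem_of_mem_erase hB))
          (fun A hA => h2 A (Finset.mem_of_mem_erase hA)) M).1 herase
        have hsum : ∑ A ∈ P, (A.card - 1) = (M.card - 1) + ∑ A ∈ P.erase M, (A.card - 1) :=
          (Finset.add_sum_erase P _ hM).symm
        have hMc : (M.card - 1) + (M.card - 1).choose 2 = M.card.choose 2 := by
          obtain ⟨t, ht⟩ : ∃ t, M.card = t + 1 := ⟨M.card - 1, by omega⟩
          rw [ht, choose_two_succ']; simp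
        calc ∑ A ∈ P, (A.card - 1) ≤ (M.card - 1) + (M.card - 1).choose 2 := by
              rw [hsum]; exact Nat.add_le_add_left hbd _
          _ = M.card.choose 2 := hMc
          _ ≤ (S.card - 1).choose 2 := Nat.choose_le_choose 2 (by omega)
      · push_neg at hall
        obtain ⟨A₀, hA₀, hA₀M⟩ := hall
        set P₁ := P.filter (fun A => A ⊆ M) with hP₁
        set P₂ := P.filter (fun A => ¬ A ⊆ M) with hP₂
        have hdisj : ∀ A ∈ P₂, Disjoint A M := by
          intro A hA
          rw [Finset.mem_filter] at hA
          obtain ⟨hAP, hAM⟩ := hA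
          rcases hlam A hAP M hM with h | h | h
          · exact Finset.disjoint_iff_inter_eq_empty.mpr h
          · exact absurd h hAM
          · exact absurd ((Finset.eq_of_subset_of_card_le h (hmax A hAP)) ▸ Finset.Subset.refl M)
              hAM
        have hcards : P₁.card + P₂.card = P.card :=
          Finset.card_filter_add_card_filter_not _
        have hM1 : M ∈ P₁ := Finset.mem_filter.mpr ⟨hM, Finset.Subset.refl M⟩
        have h20 : A₀ ∈ P₂ := Finset.mem_filter.mpr ⟨hA₀, hA₀M⟩
        have hc1 : P₁.card ≤ N := by
          have := Finset.card_pos.mpr ⟨A₀, h20⟩; omega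
        have hc2 : P₂.card ≤ N := by
          have := Finset.card_pos.mpr ⟨M, hM1⟩; omega
        have hb1 := (ih P₁ hc1
          (fun A hA B hB => hlam A (Finset.mem_of_mem_filter A hA) B (Finset.mem_of_mem_filter B hB))
          (fun A hA => h2 A (Finset.mem_of_mem_filter A hA)) M).2
          (fun A hA => (Finset.mem_filter.mp hA).2)
        have hb2 := (ih P₂ hc2
          (fun A hA B hB => hlam A (Finset.mem_of_mem_filter A hA) B (Finset.mem_of_mem_filter B hB))
          (fun A hA => h2 A (Finset.mem_of_mem_filter A hA)) (S \ M)).2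
          (fun A hA => Finset.subset_sdiff.mpr
            ⟨(hsub A (Finset.mem_of_mem_filter A hA)).subset, hdisj A hA⟩)
        have hsd : (S \ M).card = S.card - M.card := Finset.card_sdiff_of_subset hMS.subset
        have hsplit : ∑ A ∈ P₁, (A.card - 1) + ∑ A ∈ P₂, (A.card - 1) = ∑ A ∈ P, (A.card - 1) :=
          Finset.sum_filter_add_sum_filter_not _ _ _
        calc ∑ A ∈ P, (A.card - 1) ≤ M.card.choose 2 + (S \ M).card.choose 2 := by
              rw [← hsplit]; exact Nat.add_le_add hb1 hb2
          _ ≤ (M.card + (S \ M).card - 1).choose 2 := by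
              refine choose_add_le' _ _ (by omega) ?_
              rw [hsd]; omega
          _ = (S.card - 1).choose 2 := by rw [hsd]; congr 1; omega
    refine ⟨hstrict, ?_⟩
    intro hsub
    by_cases hSP : S ∈ P
    · have hs2 : 2 ≤ S.card := h2 S hSP
      have herase : ∀ A ∈ P.erase S, A ⊂ S := fun A hA =>
        lt_of_le_of_ne (hsub A (Finset.mem_of_mem_erase hA)) (Finset.ne_of_mem_erase hA)
      have hcard : (P.erase S).card ≤ N := by
        have := Finset.card_erase_of_mem hSP; omega
      have hbd := (ih (P.erase S) hcard
        (fun A hA B hB => hlam A (Finset.mem_of_mem_erase hA) B (Finset.mem_of_mem_erase hB))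
        (fun A hA => h2 A (Finset.mem_of_mem_erase hA)) S).1 herase
      have hsum : ∑ A ∈ P, (A.card - 1) = (S.card - 1) + ∑ A ∈ P.erase S, (A.card - 1) :=
        (Finset.add_sum_erase P _ hSP).symm
      have hSc : (S.card - 1) + (S.card - 1).choose 2 = S.card.choose 2 := by
        obtain ⟨t, ht⟩ : ∃ t, S.card = t + 1 := ⟨S.card - 1, by omega⟩
        rw [ht, choose_two_succ']; simp
      rw [hsum, ← hSc]
      exact Nat.add_le_add_left hbd _
    · refine le_trans (hstrict fun A hA => lt_of_le_of_ne (hsub A hA) fun h => hSP (h ▸ hA)) ?_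
      exact Nat.choose_le_choose 2 (Nat.sub_le _ _)

/-- `0 ≤ f(T) ≤ (n-1)(n-2)/2`, the lower bound being attained exactly by the
star tree and the upper bound by caterpillar trees. -/
theorem rank_bounds (H : Finset (Finset X)) (hH : IsHierarchy H) :
    rankHP H ≤ (Fintype.card X - 1) * (Fintype.card X - 2) / 2 ∧
    (rankHP H = 0 ↔ H = starH X) ∧
    (IsCaterpillar H → rankHP H = (Fintype.card X - 1) * (Fintype.card X - 2) / 2) := by
  obtain ⟨hU, hsing, hnemp, hlam⟩ := hH
  have hch : (Fintype.card X - 1).choose 2 =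
      (Fintype.card X - 1) * (Fintype.card X - 2) / 2 := by
    rw [Nat.choose_two_right, Nat.sub_sub]
  have hPCstar : properClusters (starH X) = ∅ := by
    ext A
    simp only [properClusters, Finset.mem_filter, starH, Finset.mem_insert, Finset.mem_image,
      Finset.mem_univ, true_and, Finset.notMem_empty, iff_false, not_and]
    rintro (rfl | ⟨x, rfl⟩) h
    · exact absurd rfl h
    · simp
  refine ⟨?_, ⟨?_, ?_⟩, ?_⟩
  · have hlam' : ∀ A ∈ properClusters H, ∀ B ∈ properClusters H,
        A ∩ B = ∅ ∨ A ⊆ B ∨ B ⊆ A :=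
      fun A hA B hB => hlam A (Finset.mem_of_mem_filter A hA) B (Finset.mem_of_mem_filter B hB)
    have h2 : ∀ A ∈ properClusters H, 2 ≤ A.card := by
      intro A hA; have := (Finset.mem_filter.mp hA).2.2; omega
    have hstr : ∀ A ∈ properClusters H, A ⊂ Finset.univ := fun A hA =>
      lt_of_le_of_ne (Finset.subset_univ A) (Finset.mem_filter.mp hA).2.1
    have hb := (laminar_bound (properClusters H).card (properClusters H) le_rfl hlam' h2
      Finset.univ).1 hstr
    rw [Finset.card_univ, hch] at hb
    exact hb
  · intro h0
    have hPC : properClusters H = ∅ := by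
      rw [Finset.eq_empty_iff_forall_notMem]
      intro A hA
      have h := (Finset.sum_eq_zero_iff.mp h0) A hA
      have := (Finset.mem_filter.mp hA).2.2
      omega
    ext A
    simp only [starH, Finset.mem_insert, Finset.mem_image, Finset.mem_univ, true_and]
    constructor
    · intro hA
      by_cases hAu : A = Finset.univ
      · exact Or.inl hAu
      · have hnot : A ∉ properClusters H := hPC ▸ Finset.notMem_empty A
        have hc : ¬(A ≠ Finset.univ ∧ 1 < A.card) := fun hc =>
          hnot (Finset.mem_filter.mpr ⟨hA, hc⟩)
        push_neg at hc
        have hc1 := Finset.card_pos.mpr (hnemp A hA)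
        have hA1 : A.card = 1 := by have := hc hAu; omega
        obtain ⟨x, hx⟩ := Finset.card_eq_one.mp hA1
        exact Or.inr ⟨x, hx.symm⟩
    · rintro (rfl | ⟨x, rfl⟩)
      · exact hU
      · exact hsing x
  · intro hstar
    rw [hstar, rankHP, hPCstar, Finset.sum_empty]
  · rintro ⟨-, C, hC1, hC2, hPe⟩
    have hinj : ∀ k ∈ Finset.Icc 2 (Fintype.card X - 1),
        ∀ l ∈ Finset.Icc 2 (Fintype.card X - 1), C k = C l → k = l := by
      intro k hk l hl hkl
      rw [Finset.mem_Icc] at hk hl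
      rcases lt_trichotomy k l with h | h | h
      · exact absurd hkl (hC2 k l hk.1 h hl.2).ne
      · exact h
      · exact absurd hkl.symm (hC2 l k hl.1 h hk.2).ne
    rw [rankHP, hPe, Finset.sum_image hinj, ← hch, ← sum_Icc_pred_eq_choose]
    refine Finset.sum_congr rfl fun k hk => ?_
    rw [Finset.mem_Icc] at hk
    rw [hC1 k hk.1 hk.2]
end

section
/- Let |X| = n ≥ 3 and let T be a tree on X whose only proper cluster is X \ {a} for some a ∈ X. Then the number of trees in the down-neighbourhood of T (trees T'' such that T is a binding of T'') equals the Stirling number of the second kind S(n−1, 2) = 2^{n−2} − 1, and this is the maximum down-neighbourhood size among all trees in RP(X). -/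
open Finset

variable {X : Type*} [DecidableEq X] [Fintype X]

/-- `T'` covers `T` in the partial order `≤_HP`. -/
def CoversHP (H H' : Finset (Finset X)) : Prop :=
  LeHP H H' ∧ H ≠ H' ∧
    ∀ H'' : Finset (Finset X), IsHierarchy H'' → LeHP H H'' → LeHP H'' H' → H'' = H ∨ H'' = H'

/-- Adjacency in the Hasse diagram of `≤_HP` on hierarchies. -/
def HasseAdj (H H' : Finset (Finset X)) : Prop :=
  IsHierarchy H ∧ IsHierarchy H' ∧ (CoversHP H H' ∨ CoversHP H' H)

/-- There is a walk of length `n` between `H` and `H'` in the Hasse diagram. -/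
def HasPathHP (H H' : Finset (Finset X)) (n : ℕ) : Prop :=
  ∃ c : ℕ → Finset (Finset X), c 0 = H ∧ c n = H' ∧ ∀ i < n, HasseAdj (c i) (c (i + 1))

/-- `d` is the geodesic distance between `H` and `H'` in the Hasse diagram of `≤_HP`. -/
def DistHP (H H' : Finset (Finset X)) (d : ℕ) : Prop :=
  HasPathHP H H' d ∧ ∀ m : ℕ, HasPathHP H H' m → d ≤ m

/-- The down-neighbourhood of `T`: the hierarchies covered by `T` in the Hasse diagram. -/
def downNbhd (H : Finset (Finset X)) : Set (Finset (Finset X)) :=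
  {H'' | IsHierarchy H'' ∧ CoversHP H'' H}

/-!
A hierarchy `H` covered by `T'` is a down-move of `T'`. Given an HP map `δ : H → T'` with
`H ≠ T'`, take an inclusion-minimal cluster `Z` of `T'` that is not in `H` or is the image of a
strictly smaller cluster. The clusters sent to `Z` are pairwise disjoint and compatible with the
children of `Z`, so some split `U`, `Z \ U` of the children separates them, and redirecting
them to `U` or `Z \ U` is an HP map into the down-move. Hence `H` lies between that down-move
and `T'`, and by the covering property it equals the down-move.

A down-move at `Z` is a two-block partition of its `k_Z` children, so there are
`S(k_Z, 2) = 2 ^ (k_Z - 1) - 1` of them. Counting parent–child pairs gives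
`∑ (k_Z - 1) ≤ n - 2` over proper clusters (the root has at least two children), and
`∑ (2 ^ g - 1) ≤ 2 ^ (∑ g) - 1`. For the tree whose only proper cluster is `X \ {a}`, with
`n - 1` singleton children, every down-move is covered by it, so the bound is attained.
-/

variable {H G : Finset (Finset X)} {A B C Y Z U : Finset X}

namespace IsHierarchy

theorem nonempty_of_mem (hH : IsHierarchy H) (hA : A ∈ H) : A.Nonempty := hH.2.2.1 A hA

theorem subset_or_subset (hH : IsHierarchy H) (hA : A ∈ H) (hB : B ∈ H)
    (hAB : ¬Disjoint A B) : A ⊆ B ∨ B ⊆ A := by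
  rcases hH.2.2.2 A hA B hB with h | h
  · exact absurd (disjoint_iff_inter_eq_empty.2 h) hAB
  · exact h

theorem disjoint_or_subset_or_subset (hH : IsHierarchy H) (hA : A ∈ H) (hB : B ∈ H) :
    Disjoint A B ∨ A ⊆ B ∨ B ⊆ A := by
  rw [disjoint_iff_inter_eq_empty]
  exact hH.2.2.2 A hA B hB

theorem mem_iff (hH : IsHierarchy H) :
    A ∈ H ↔ A = univ ∨ (∃ x, A = {x}) ∨ A ∈ properClusters H := by
  refine ⟨fun hA => ?_, ?_⟩
  · by_cases hAu : A = univ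
    · exact Or.inl hAu
    by_cases hAc : 1 < A.card
    · exact Or.inr (Or.inr (mem_filter.2 ⟨hA, hAu, hAc⟩))
    · have := (hH.nonempty_of_mem hA).card_pos
      exact Or.inr (Or.inl (card_eq_one.1 (by omega)))
  · rintro (rfl | ⟨x, rfl⟩ | hA)
    exacts [hH.1, hH.2.1 x, (mem_filter.1 hA).1]

theorem eq_of_properClusters_eq (hG : IsHierarchy G) (hH : IsHierarchy H)
    (h : properClusters G = properClusters H) : G = H := by
  ext A
  rw [hG.mem_iff, hH.mem_iff, h]

end IsHierarchy

omit [Fintype X] in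
theorem exists_isMaxSub_of_ssubset (hZ : Z ∈ H) (hC : C ∈ H) (hCZ : C ⊂ Z) :
    ∃ Y, IsMaxSub H Y Z ∧ C ⊆ Y := by
  obtain ⟨Y, hCY, hY⟩ := (H.filter fun Y => C ⊆ Y ∧ Y ⊂ Z).exists_le_maximal
    (mem_filter.2 ⟨hC, subset_rfl, hCZ⟩)
  obtain ⟨hYH, -, hYZ⟩ := mem_filter.1 hY.prop
  refine ⟨Y, ⟨hYH, hZ, hYZ, fun D hD ⟨hYD, hDZ⟩ => ?_⟩, hCY⟩
  exact hYD.not_ge (hY.2 (mem_filter.2 ⟨hD, hCY.trans hYD.subset, hDZ⟩) hYD.le)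

theorem IsHierarchy.exists_isMaxSub_of_ne_univ (hH : IsHierarchy H) (hA : A ∈ H)
    (hAu : A ≠ univ) : ∃ Z, IsMaxSub H A Z := by
  obtain ⟨Z, -, hZ⟩ := (H.filter (A ⊂ ·)).exists_le_minimal
    (mem_filter.2 ⟨hH.1, ssubset_univ_iff.2 hAu⟩)
  obtain ⟨hZH, hAZ⟩ := mem_filter.1 hZ.prop
  exact ⟨Z, hA, hZH, hAZ, fun D hD ⟨hAD, hDZ⟩ =>
    hDZ.not_ge (hZ.2 (mem_filter.2 ⟨hD, hAD⟩) hDZ.le)⟩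

theorem IsHierarchy.exists_isMaxSub_mem (hH : IsHierarchy H) (hZ : Z ∈ H) (hZc : 1 < Z.card)
    {x : X} (hx : x ∈ Z) : ∃ Y, IsMaxSub H Y Z ∧ x ∈ Y := by
  have hxZ : {x} ⊂ Z := ssubset_of_subset_of_ne (singleton_subset_iff.2 hx) fun h => by
    simp [← h] at hZc
  obtain ⟨Y, hY, hxY⟩ := exists_isMaxSub_of_ssubset hZ (hH.2.1 x) hxZ
  exact ⟨Y, hY, singleton_subset_iff.1 hxY⟩

theorem IsHierarchy.disjoint_of_isMaxSub (hH : IsHierarchy H) {Y₁ Y₂ : Finset X}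
    (h₁ : IsMaxSub H Y₁ Z) (h₂ : IsMaxSub H Y₂ Z) (hne : Y₁ ≠ Y₂) : Disjoint Y₁ Y₂ := by
  by_contra hd
  rcases hH.subset_or_subset h₁.1 h₂.1 hd with h | h
  · exact h₁.2.2.2 Y₂ h₂.1 ⟨ssubset_of_subset_of_ne h hne, h₂.2.2.1⟩
  · exact h₂.2.2.2 Y₁ h₁.1 ⟨ssubset_of_subset_of_ne h hne.symm, h₁.2.2.1⟩

theorem IsHierarchy.eq_of_isMaxSub (hH : IsHierarchy H) {Z₁ Z₂ : Finset X}
    (h₁ : IsMaxSub H A Z₁) (h₂ : IsMaxSub H A Z₂) : Z₁ = Z₂ := by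
  have hA := hH.nonempty_of_mem h₁.1
  have hd : ¬Disjoint Z₁ Z₂ :=
    (hA.mono (subset_inter h₁.2.2.1.subset h₂.2.2.1.subset)).not_disjoint
  by_contra hne
  rcases hH.subset_or_subset h₁.2.1 h₂.2.1 hd with h | h
  · exact h₂.2.2.2 Z₁ h₁.2.1 ⟨h₁.2.2.1, ssubset_of_subset_of_ne h hne⟩
  · exact h₁.2.2.2 Z₂ h₂.2.1 ⟨h₂.2.2.1, ssubset_of_subset_of_ne h (Ne.symm hne)⟩

open Classical in
noncomputable def children (H : Finset (Finset X)) (Z : Finset X) : Finset (Finset X) :=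
  H.filter (IsMaxSub H · Z)

omit [DecidableEq X] [Fintype X] in
@[simp]
theorem mem_children : Y ∈ children H Z ↔ IsMaxSub H Y Z := by
  classical
  simp only [children, mem_filter, and_iff_right_iff_imp]
  exact fun h => h.1

theorem IsHierarchy.one_lt_card_children (hH : IsHierarchy H) (hZ : Z ∈ H) (hZc : 1 < Z.card) :
    1 < (children H Z).card := by
  obtain ⟨x, hx⟩ := card_pos.1 (by omega : 0 < Z.card)
  obtain ⟨Y₁, hY₁, hxY₁⟩ := hH.exists_isMaxSub_mem hZ hZc hx
  obtain ⟨y, hyZ, hyY₁⟩ := exists_of_ssubset hY₁.2.2.1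
  obtain ⟨Y₂, hY₂, hyY₂⟩ := hH.exists_isMaxSub_mem hZ hZc hyZ
  exact one_lt_card.2 ⟨Y₁, mem_children.2 hY₁, Y₂, mem_children.2 hY₂,
    fun h => hyY₁ (h ▸ hyY₂)⟩

theorem IsHierarchy.sum_card_children (hH : IsHierarchy H) :
    ∑ Z ∈ H.filter (1 < ·.card), (children H Z).card = H.card - 1 := by
  have hunion : (H.filter (1 < ·.card)).biUnion (children H) = H.erase univ := by
    ext A
    simp only [mem_biUnion, mem_filter, mem_children, mem_erase]
    constructor
    · rintro ⟨Z, -, hAZ⟩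
      exact ⟨(hAZ.2.2.1.trans_subset (subset_univ Z)).ne, hAZ.1⟩
    · rintro ⟨hAu, hA⟩
      obtain ⟨Z, hAZ⟩ := hH.exists_isMaxSub_of_ne_univ hA hAu
      have := (hH.nonempty_of_mem hA).card_pos
      have := card_lt_card hAZ.2.2.1
      exact ⟨Z, ⟨hAZ.2.1, by omega⟩, hAZ⟩
  have hdisj : (H.filter (1 < ·.card) : Set (Finset X)).PairwiseDisjoint (children H) :=
    fun Z₁ _ Z₂ _ hne => disjoint_left.2 fun A h₁ h₂ =>
      hne (hH.eq_of_isMaxSub (mem_children.1 h₁) (mem_children.1 h₂))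
  rw [← card_biUnion hdisj, hunion, card_erase_of_mem hH.1]

theorem IsHierarchy.card_filter_one_lt_card (hH : IsHierarchy H) :
    (H.filter (1 < ·.card)).card + Fintype.card X = H.card := by
  have hsingle : H.filter (¬1 < ·.card) = univ.map ⟨singleton, singleton_injective⟩ := by
    ext A
    simp only [mem_filter, mem_map, mem_univ, true_and, Function.Embedding.coeFn_mk]
    constructor
    · rintro ⟨hA, hc⟩
      have := (hH.nonempty_of_mem hA).card_pos
      obtain ⟨x, rfl⟩ := card_eq_one.1 (by omega : A.card = 1)
      exact ⟨x, rfl⟩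
    · rintro ⟨x, rfl⟩
      exact ⟨hH.2.1 x, by simp⟩
  rw [← card_filter_add_card_filter_not (s := H) (1 < ·.card), hsingle, card_map, card_univ]

theorem IsHierarchy.sum_card_children_sub_one_le (hH : IsHierarchy H) :
    ∑ Z ∈ properClusters H, ((children H Z).card - 1) ≤ Fintype.card X - 2 := by
  rcases (properClusters H).eq_empty_or_nonempty with hP | ⟨Z₀, hZ₀⟩
  · simp [hP]
  have hX : 1 < (univ : Finset X).card := by
    obtain ⟨-, -, hZ₀c⟩ := mem_filter.1 hZ₀
    exact hZ₀c.trans_le (card_le_card (subset_univ Z₀))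
  have hsplit : (H.filter (1 < ·.card)).erase univ = properClusters H := by
    ext A
    simp only [mem_erase, mem_filter, properClusters]
    tauto
  have hu : univ ∈ H.filter (1 < ·.card) := mem_filter.2 ⟨hH.1, hX⟩
  have hsum := hH.sum_card_children
  rw [← add_sum_erase _ _ hu, hsplit] at hsum
  have hcard := hH.card_filter_one_lt_card
  rw [← card_erase_add_one hu, hsplit] at hcard
  have hroot := hH.one_lt_card_children hH.1 hX
  have hpos : ∀ Z ∈ properClusters H, 1 ≤ (children H Z).card := fun Z hZ =>
    (hH.one_lt_card_children (mem_filter.1 hZ).1 (mem_filter.1 hZ).2.2).le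
  rw [sum_tsub_distrib _ hpos, sum_const, smul_eq_mul, mul_one]
  omega

theorem sum_two_pow_sub_one_le {ι : Type*} (s : Finset ι) (g : ι → ℕ) :
    ∑ i ∈ s, (2 ^ g i - 1) ≤ 2 ^ (∑ i ∈ s, g i) - 1 := by
  classical
  induction s using Finset.induction_on with
  | empty => simp
  | insert i s hi ih =>
    rw [sum_insert hi, sum_insert hi, pow_add]
    have h₁ := Nat.one_le_two_pow (n := g i)
    have h₂ := Nat.one_le_two_pow (n := ∑ i ∈ s, g i)
    have : 2 ^ g i + 2 ^ (∑ i ∈ s, g i) ≤ 2 ^ g i * 2 ^ (∑ i ∈ s, g i) + 1 := by nlinarith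
    omega

namespace IsHPMap

variable {δ : Finset X → Finset X}

theorem map_univ (hδ : IsHPMap G H δ) (hG : IsHierarchy G) : δ univ = univ :=
  univ_subset_iff.1 (hδ.2.2.1 _ hG.1)

theorem map_ne_univ (hδ : IsHPMap G H δ) (hG : IsHierarchy G) (hA : A ∈ G) (hAu : A ≠ univ) :
    δ A ≠ univ := by
  have := hδ.2.2.2 A hA univ hG.1 (ssubset_univ_iff.2 hAu)
  rw [hδ.map_univ hG] at this
  exact this.ne

theorem disjoint_of_map_eq (hδ : IsHPMap G H δ) (hG : IsHierarchy G) (hA : A ∈ G) (hB : B ∈ G)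
    (hAB : A ≠ B) (heq : δ A = δ B) : Disjoint A B := by
  by_contra hd
  rcases hG.subset_or_subset hA hB hd with h | h
  · exact (hδ.2.2.2 A hA B hB (ssubset_of_subset_of_ne h hAB)).ne heq
  · exact (hδ.2.2.2 B hB A hA (ssubset_of_subset_of_ne h hAB.symm)).ne heq.symm

theorem map_mem_properClusters (hδ : IsHPMap G H δ) (hG : IsHierarchy G)
    (hA : A ∈ properClusters G) : δ A ∈ properClusters H := by
  obtain ⟨hAG, hAu, hAc⟩ := mem_filter.1 hA
  exact mem_filter.2 ⟨hδ.1 A hAG, hδ.map_ne_univ hG hAG hAu,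
    hAc.trans_le (card_le_card (hδ.2.2.1 A hAG))⟩

end IsHPMap

/-- `U` is the union of a nonempty proper subset of the children of `Z`. -/
def IsSplit (H : Finset (Finset X)) (Z U : Finset X) : Prop :=
  U ⊆ Z ∧ U.Nonempty ∧ U ≠ Z ∧ ∀ Y, IsMaxSub H Y Z → Y ⊆ U ∨ Disjoint Y U

/-- The paper adds only the non-singleton parts; a singleton part is already in `H`, so
inserting it changes nothing. -/
def downMove (H : Finset (Finset X)) (Z U : Finset X) : Finset (Finset X) :=
  insert U (insert (Z \ U) (H.erase Z))

omit [Fintype X] in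
theorem mem_downMove : A ∈ downMove H Z U ↔ A = U ∨ A = Z \ U ∨ (A ∈ H ∧ A ≠ Z) := by
  simp [downMove, and_comm]

omit [Fintype X] in
theorem downMove_sdiff (hU : U ⊆ Z) : downMove H Z (Z \ U) = downMove H Z U := by
  rw [downMove, downMove, Finset.sdiff_sdiff_eq_self hU, insert_comm]

namespace IsSplit

omit [Fintype X] in
theorem sdiff_nonempty (hU : IsSplit H Z U) : (Z \ U).Nonempty :=
  Finset.sdiff_nonempty.2 fun h => hU.2.2.1 (hU.1.antisymm h)

omit [Fintype X] in
theorem sdiff (hU : IsSplit H Z U) : IsSplit H Z (Z \ U) := by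
  refine ⟨sdiff_subset, hU.sdiff_nonempty, fun h => ?_, fun Y hY => ?_⟩
  · obtain ⟨x, hx⟩ := hU.2.1
    exact (mem_sdiff.1 (h ▸ hU.1 hx)).2 hx
  · rcases hU.2.2.2 Y hY with h | h
    · exact Or.inr (disjoint_sdiff.mono_left h)
    · exact Or.inl (subset_sdiff.2 ⟨hY.2.2.1.subset, h⟩)

theorem of_isMaxSub (hH : IsHierarchy H) (hY : IsMaxSub H Y Z) : IsSplit H Z Y := by
  refine ⟨hY.2.2.1.subset, hH.nonempty_of_mem hY.1, hY.2.2.1.ne, fun Y' hY' => ?_⟩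
  by_cases h : Y' = Y
  · exact Or.inl h.le
  · exact Or.inr (hH.disjoint_of_isMaxSub hY' hY h)

omit [Fintype X] in
theorem subset_of_not_disjoint (hZ : Z ∈ H) (hU : IsSplit H Z U)
    (hC : C ∈ H) (hCZ : C ⊂ Z) (hCU : ¬Disjoint C U) : C ⊆ U := by
  obtain ⟨Y, hY, hCY⟩ := exists_isMaxSub_of_ssubset hZ hC hCZ
  rcases hU.2.2.2 Y hY with h | h
  · exact hCY.trans h
  · exact absurd (h.mono_left hCY) hCU

theorem disjoint_or_subset_or_subset (hH : IsHierarchy H) (hZ : Z ∈ H) (hU : IsSplit H Z U)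
    (hC : C ∈ H) (hCZ : C ≠ Z) : Disjoint U C ∨ U ⊆ C ∨ C ⊆ U := by
  rcases hH.disjoint_or_subset_or_subset hZ hC with h | h | h
  · exact Or.inl (h.mono_left hU.1)
  · exact Or.inr (Or.inl (hU.1.trans h))
  · by_cases hd : Disjoint C U
    · exact Or.inl hd.symm
    · exact Or.inr (Or.inr (hU.subset_of_not_disjoint hZ hC (ssubset_of_subset_of_ne h hCZ) hd))

omit [Fintype X] in
theorem ite (hU : IsSplit H Z U) (p : Prop) [Decidable p] :
    IsSplit H Z (if p then U else Z \ U) := by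
  split_ifs
  exacts [hU, hU.sdiff]

end IsSplit

omit [Fintype X] in
theorem subset_ite_sdiff (hAZ : A ⊆ Z) (hAU : A ⊆ U ∨ Disjoint A U) :
    A ⊆ if A ⊆ U then U else Z \ U := by
  split_ifs with h
  exacts [h, subset_sdiff.2 ⟨hAZ, hAU.resolve_left h⟩]

omit [Fintype X] in
theorem notMem_downMove (hU : IsSplit H Z U) : Z ∉ downMove H Z U := by
  rw [mem_downMove]
  rintro (h | h | ⟨-, h⟩)
  · exact hU.2.2.1 h.symm
  · obtain ⟨x, hx⟩ := hU.2.1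
    exact (mem_sdiff.1 (h ▸ hU.1 hx)).2 hx
  · exact h rfl

theorem isHierarchy_downMove (hH : IsHierarchy H) (hZ : Z ∈ properClusters H)
    (hU : IsSplit H Z U) : IsHierarchy (downMove H Z U) := by
  obtain ⟨hZH, hZu, hZc⟩ := mem_filter.1 hZ
  have hsymm : ∀ {A B : Finset X}, Disjoint A B ∨ A ⊆ B ∨ B ⊆ A →
      Disjoint B A ∨ B ⊆ A ∨ A ⊆ B := fun h => h.imp (fun h => h.symm) Or.symm
  refine ⟨mem_downMove.2 (Or.inr (Or.inr ⟨hH.1, Ne.symm hZu⟩)),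
    fun x => mem_downMove.2 (Or.inr (Or.inr ⟨hH.2.1 x, fun h => by simp [← h] at hZc⟩)), ?_, ?_⟩
  · intro A hA
    rcases mem_downMove.1 hA with rfl | rfl | ⟨hA, -⟩
    exacts [hU.2.1, hU.sdiff_nonempty, hH.nonempty_of_mem hA]
  · intro A hA B hB
    simp only [← disjoint_iff_inter_eq_empty]
    rcases mem_downMove.1 hA with rfl | rfl | ⟨hAH, hAZ⟩ <;>
      rcases mem_downMove.1 hB with rfl | rfl | ⟨hBH, hBZ⟩
    · exact Or.inr (Or.inl subset_rfl)
    · exact Or.inl disjoint_sdiff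
    · exact hU.disjoint_or_subset_or_subset hH hZH hBH hBZ
    · exact Or.inl sdiff_disjoint
    · exact Or.inr (Or.inl subset_rfl)
    · exact hU.sdiff.disjoint_or_subset_or_subset hH hZH hBH hBZ
    · exact hsymm (hU.disjoint_or_subset_or_subset hH hZH hAH hAZ)
    · exact hsymm (hU.sdiff.disjoint_or_subset_or_subset hH hZH hAH hAZ)
    · exact hH.disjoint_or_subset_or_subset hAH hBH

theorem IsHierarchy.leHP_downMove (hH : IsHierarchy H) (hZ : Z ∈ H) (hU : IsSplit H Z U) :
    LeHP (downMove H Z U) H := by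
  classical
  have hnew : ∀ A ∈ downMove H Z U, A ∉ H → A = U ∨ A = Z \ U := fun A hA hAH => by
    rcases mem_downMove.1 hA with h | h | ⟨h, -⟩
    exacts [Or.inl h, Or.inr h, absurd h hAH]
  have hsplit : ∀ A ∈ downMove H Z U, A ∉ H → IsSplit H Z A := fun A hA hAH => by
    rcases hnew A hA hAH with rfl | rfl
    exacts [hU, hU.sdiff]
  refine ⟨fun A => if A ∈ H then A else Z, fun A _ => ?_, fun x => if_pos (hH.2.1 x),
    fun A hA => ?_, fun A hA B hB hAB => ?_⟩
  · dsimp only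
    split_ifs with h
    exacts [h, hZ]
  · dsimp only
    split_ifs with h
    exacts [subset_rfl, (hsplit A hA h).1]
  by_cases hAH : A ∈ H <;> by_cases hBH : B ∈ H <;> simp only [hAH, hBH, if_true, if_false]
  · exact hAB
  · exact hAB.trans_subset (hsplit B hB hBH).1
  · have hA' := hsplit A hA hAH
    have hBZ : B ≠ Z := by
      rintro rfl
      exact notMem_downMove hU hB
    have hZB : ¬Disjoint Z B := (hA'.2.1.mono (subset_inter hA'.1 hAB.subset)).not_disjoint
    rcases hH.subset_or_subset hZ hBH hZB with h | h
    · exact ssubset_of_subset_of_ne h hBZ.symm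
    · have hBA := hA'.subset_of_not_disjoint hZ hBH (ssubset_of_subset_of_ne h hBZ)
        (hA'.2.1.mono (subset_inter hAB.subset subset_rfl)).not_disjoint
      exact absurd hBA hAB.not_subset
  · exfalso
    have hd : Disjoint A B := by
      rcases hnew A hA hAH with rfl | rfl <;> rcases hnew B hB hBH with rfl | rfl
      exacts [absurd rfl hAB.ne, disjoint_sdiff, sdiff_disjoint, absurd rfl hAB.ne]
    exact ((hsplit A hA hAH).2.1.mono (subset_inter subset_rfl hAB.subset)).not_disjoint hd

theorem IsHierarchy.exists_isSplit_forall_subset_or_disjoint (hH : IsHierarchy H)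
    (hG : IsHierarchy G) (hZ : Z ∈ G) (hZc : 1 < Z.card)
    (hchild : ∀ Y, IsMaxSub G Y Z → Y ∈ H) (P : Finset (Finset X)) (hPH : P ⊆ H)
    (hPZ : ∀ A ∈ P, A ⊂ Z) (hPdisj : ∀ A ∈ P, ∀ B ∈ P, A ≠ B → Disjoint A B) :
    ∃ U, IsSplit G Z U ∧ ∀ A ∈ P, A ⊆ U ∨ Disjoint A U := by
  by_cases hbig : ∃ A₀ ∈ P, ∀ Y, IsMaxSub G Y Z → ¬A₀ ⊆ Y
  · obtain ⟨A₀, hA₀, hA₀Y⟩ := hbig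
    refine ⟨A₀, ⟨(hPZ A₀ hA₀).subset, hH.nonempty_of_mem (hPH hA₀), (hPZ A₀ hA₀).ne,
      fun Y hY => ?_⟩, fun A hA => ?_⟩
    · by_cases hd : Disjoint Y A₀
      · exact Or.inr hd
      · exact Or.inl ((hH.subset_or_subset (hchild Y hY) (hPH hA₀) hd).resolve_right (hA₀Y Y hY))
    · by_cases h : A = A₀
      · exact Or.inl h.le
      · exact Or.inr (hPdisj A hA A₀ hA₀ h)
  · push Not at hbig
    obtain ⟨x, hx⟩ := card_pos.1 (by omega : 0 < Z.card)
    obtain ⟨Y₀, hY₀, -⟩ := hG.exists_isMaxSub_mem hZ hZc hx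
    refine ⟨Y₀, .of_isMaxSub hG hY₀, fun A hA => ?_⟩
    obtain ⟨Y, hY, hAY⟩ := hbig A hA
    by_cases h : Y = Y₀
    · exact Or.inl (h ▸ hAY)
    · exact Or.inr ((hG.disjoint_of_isMaxSub hY hY₀ h).mono_left hAY)

theorem IsHPMap.isHPMap_downMove {δ : Finset X → Finset X} (hδ : IsHPMap H G δ)
    (hH : IsHierarchy H) (hZ : Z ∈ G) (hZc : 1 < Z.card) (hU : IsSplit G Z U)
    (hPU : ∀ A ∈ H, δ A = Z → A ⊆ U ∨ Disjoint A U)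
    (hmin : ∀ C ∈ G, C ⊂ Z → ∀ A ∈ H, A ⊂ C → δ A ≠ C) :
    IsHPMap H (downMove G Z U)
      (fun A => if δ A = Z then (if A ⊆ U then U else Z \ U) else δ A) := by
  classical
  obtain ⟨hmem, hsing, hsub, hmono⟩ := hδ
  set side : Finset X → Finset X := fun A => if A ⊆ U then U else Z \ U
  have hside_sub : ∀ A ∈ H, δ A = Z → A ⊆ side A := fun A hA hAZ =>
    subset_ite_sdiff (hAZ ▸ hsub A hA) (hPU A hA hAZ)
  refine ⟨fun A hA => ?_, fun x => ?_, fun A hA => ?_, fun A hA B hB hAB => ?_⟩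
  · dsimp only
    split_ifs with hAZ h
    · exact mem_downMove.2 (Or.inl rfl)
    · exact mem_downMove.2 (Or.inr (Or.inl rfl))
    · exact mem_downMove.2 (Or.inr (Or.inr ⟨hmem A hA, hAZ⟩))
  · have hxZ : ({x} : Finset X) ≠ Z := fun h => by simp [← h] at hZc
    simp only [hsing x, hxZ, if_false]
  · change A ⊆ if δ A = Z then side A else δ A
    by_cases hAZ : δ A = Z
    · rw [if_pos hAZ]
      exact hside_sub A hA hAZ
    · rw [if_neg hAZ]
      exact hsub A hA
  have hδAB := hmono A hA B hB hAB
  change (if δ A = Z then side A else δ A) ⊂ (if δ B = Z then side B else δ B)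
  by_cases hAZ : δ A = Z <;> by_cases hBZ : δ B = Z <;> simp only [hAZ, hBZ, if_true, if_false]
  · exact absurd (hAZ.trans hBZ.symm) hδAB.ne
  · exact (hU.ite _).1.trans_ssubset (hAZ ▸ hδAB)
  · have hS : IsSplit G Z (side B) := hU.ite _
    have hBS := hside_sub B hB hBZ
    have hδA : δ A ⊂ Z := hBZ ▸ hδAB
    obtain ⟨x, hx⟩ := hH.nonempty_of_mem hA
    have hδAS : δ A ⊆ side B := hS.subset_of_not_disjoint hZ (hmem A hA) hδA
      (not_disjoint_iff.2 ⟨x, hsub A hA hx, hBS (hAB.subset hx)⟩)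
    -- equality would make `side B` a cluster below `Z` hit by the smaller `A`
    refine ssubset_of_subset_of_ne hδAS fun h => hmin _ (h ▸ hmem A hA) (h ▸ hδA) A hA ?_ h
    exact ssubset_of_subset_of_ne (h ▸ hsub A hA) (hAB.trans_subset hBS).ne
  · exact hδAB

omit [Fintype X] in
theorem IsHPMap.exists_minimal_critical {δ : Finset X → Finset X} (hδ : IsHPMap H G δ)
    (hne : H ≠ G) :
    ∃ Z ∈ G, (Z ∉ H ∨ ∃ A ∈ H, A ⊂ Z ∧ δ A = Z) ∧
      ∀ C ∈ G, C ⊂ Z → C ∈ H ∧ ∀ A ∈ H, A ⊂ C → δ A ≠ C := by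
  classical
  set crit : Finset X → Prop := fun Z => Z ∉ H ∨ ∃ A ∈ H, A ⊂ Z ∧ δ A = Z
  have hex : (G.filter crit).Nonempty := by
    by_cases hGH : G ⊆ H
    · obtain ⟨A, hAH, hAG⟩ := not_subset.1 fun h => hne (h.antisymm hGH)
      refine ⟨δ A, mem_filter.2 ⟨hδ.1 A hAH, Or.inr ⟨A, hAH, ?_, rfl⟩⟩⟩
      exact ssubset_of_subset_of_ne (hδ.2.2.1 A hAH) fun h => hAG (h ▸ hδ.1 A hAH)
    · obtain ⟨Z, hZG, hZH⟩ := not_subset.1 hGH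
      exact ⟨Z, mem_filter.2 ⟨hZG, Or.inl hZH⟩⟩
  obtain ⟨Z, hZ⟩ := exists_minimal hex
  obtain ⟨hZG, hZcrit⟩ := mem_filter.1 hZ.prop
  refine ⟨Z, hZG, hZcrit, fun C hC hCZ => ?_⟩
  have hC : ¬crit C := fun h => hCZ.not_ge (hZ.2 (mem_filter.2 ⟨hC, h⟩) hCZ.le)
  simp only [crit, not_or, not_not, not_exists, not_and] at hC
  exact ⟨hC.1, fun A hA hAC => hC.2 A hA hAC⟩

theorem IsHierarchy.exists_leHP_downMove (hH : IsHierarchy H) (hG : IsHierarchy G)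
    (hle : LeHP H G) (hne : H ≠ G) :
    ∃ Z ∈ properClusters G, ∃ U, IsSplit G Z U ∧ LeHP H (downMove G Z U) := by
  classical
  obtain ⟨δ, hδ⟩ := hle
  obtain ⟨Z, hZG, hZcrit, hbelow⟩ := hδ.exists_minimal_critical hne
  have hZu : Z ≠ univ := by
    rintro rfl
    rcases hZcrit with h | ⟨A, hA, hAu, hδA⟩
    exacts [h hH.1, hδ.map_ne_univ hH hA hAu.ne hδA]
  have hZc : 1 < Z.card := by
    by_contra hc
    have := (hG.nonempty_of_mem hZG).card_pos
    obtain ⟨z, rfl⟩ := card_eq_one.1 (by omega : Z.card = 1)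
    rcases hZcrit with h | ⟨A, hA, hAz, -⟩
    · exact h (hH.2.1 z)
    · exact hAz.ne ((hH.nonempty_of_mem hA).subset_singleton_iff.1 hAz.subset)
  have hPZ : ∀ A ∈ H.filter (δ · = Z), A ⊂ Z := fun A hA => by
    obtain ⟨hAH, hAZ⟩ := mem_filter.1 hA
    refine ssubset_of_subset_of_ne (hAZ ▸ hδ.2.2.1 A hAH) ?_
    rintro rfl
    rcases hZcrit with h | ⟨A', hA', hA'A, hδA'⟩
    exacts [h hAH, (hδ.2.2.2 A' hA' A hAH hA'A).ne (hδA'.trans hAZ.symm)]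
  obtain ⟨U, hU, hPU⟩ := hH.exists_isSplit_forall_subset_or_disjoint hG hZG hZc
    (fun Y hY => (hbelow Y hY.1 hY.2.2.1).1) _ (filter_subset _ _) hPZ
    fun A hA B hB hAB => hδ.disjoint_of_map_eq hH (mem_filter.1 hA).1 (mem_filter.1 hB).1 hAB
      ((mem_filter.1 hA).2.trans (mem_filter.1 hB).2.symm)
  exact ⟨Z, mem_filter.2 ⟨hZG, hZu, hZc⟩, U, hU, _,
    hδ.isHPMap_downMove hH hZG hZc hU (fun A hA hAZ => hPU A (mem_filter.2 ⟨hA, hAZ⟩))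
      fun C hC hCZ => (hbelow C hC hCZ).2⟩

theorem CoversHP.exists_eq_downMove (hcov : CoversHP H G) (hH : IsHierarchy H)
    (hG : IsHierarchy G) : ∃ Z ∈ properClusters G, ∃ U, IsSplit G Z U ∧ H = downMove G Z U := by
  obtain ⟨hle, hne, hmin⟩ := hcov
  obtain ⟨Z, hZ, U, hU, hleU⟩ := hH.exists_leHP_downMove hG hle hne
  have hZG := (mem_filter.1 hZ).1
  refine ⟨Z, hZ, U, hU, ?_⟩
  rcases hmin _ (isHierarchy_downMove hG hZ hU) hleU (hG.leHP_downMove hZG hU) with h | h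
  · exact h.symm
  · exact absurd hZG (h ▸ notMem_downMove hU)

open Classical in
noncomputable def downMoves (H : Finset (Finset X)) (Z : Finset X) : Finset (Finset (Finset X)) :=
  (Z.powerset.filter (IsSplit H Z)).image (downMove H Z)

open Classical in
noncomputable def splitsThrough (H : Finset (Finset X)) (Z Y₀ : Finset X) : Finset (Finset X) :=
  Z.powerset.filter fun U => IsSplit H Z U ∧ Y₀ ⊆ U

omit [Fintype X] in
theorem mem_downMoves : G ∈ downMoves H Z ↔ ∃ U, IsSplit H Z U ∧ downMove H Z U = G := by
  classical
  simp only [downMoves, mem_image, mem_filter, mem_powerset]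
  exact ⟨fun ⟨U, ⟨_, hU⟩, h⟩ => ⟨U, hU, h⟩, fun ⟨U, hU, h⟩ => ⟨U, ⟨hU.1, hU⟩, h⟩⟩

omit [Fintype X] in
theorem mem_splitsThrough : U ∈ splitsThrough H Z Y ↔ IsSplit H Z U ∧ Y ⊆ U := by
  classical
  simp only [splitsThrough, mem_filter, mem_powerset, and_iff_right_iff_imp]
  exact fun h => h.1.1

theorem IsHierarchy.subset_sup_children_iff (hH : IsHierarchy H) {S : Finset (Finset X)}
    (hS : S ⊆ children H Z) (hY : Y ∈ children H Z) : Y ⊆ S.sup id ↔ Y ∈ S := by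
  refine ⟨fun h => ?_, fun h => le_sup (f := id) h⟩
  obtain ⟨x, hx⟩ := hH.nonempty_of_mem (mem_children.1 hY).1
  obtain ⟨Y', hY'S, hxY'⟩ := mem_sup.1 (h hx)
  by_cases hYY' : Y = Y'
  · exact hYY' ▸ hY'S
  · exact absurd (hH.disjoint_of_isMaxSub (mem_children.1 hY) (mem_children.1 (hS hY'S)) hYY')
      (not_disjoint_iff.2 ⟨x, hx, hxY'⟩)

theorem IsHierarchy.filter_children_subset_sup (hH : IsHierarchy H) {S : Finset (Finset X)}
    (hS : S ⊆ children H Z) : (children H Z).filter (· ⊆ S.sup id) = S := by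
  ext Y
  rw [mem_filter]
  exact ⟨fun h => (hH.subset_sup_children_iff hS h.1).1 h.2,
    fun h => ⟨hS h, (hH.subset_sup_children_iff hS (hS h)).2 h⟩⟩

theorem IsHierarchy.isSplit_sup (hH : IsHierarchy H) {S : Finset (Finset X)}
    (hS : S ⊆ children H Z) (hSne : S.Nonempty) (hSC : S ≠ children H Z) :
    IsSplit H Z (S.sup id) := by
  obtain ⟨Y₀, hY₀⟩ := hSne
  obtain ⟨Y₁, hY₁C, hY₁S⟩ := not_subset.1 fun h => hSC (hS.antisymm h)
  refine ⟨Finset.sup_le fun Y hY => (mem_children.1 (hS hY)).2.2.1.subset,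
    (hH.nonempty_of_mem (mem_children.1 (hS hY₀)).1).mono (le_sup (f := id) hY₀),
    fun h => hY₁S ((hH.subset_sup_children_iff hS hY₁C).1 ?_), fun Y hY => ?_⟩
  · exact h ▸ (mem_children.1 hY₁C).2.2.1.subset
  · by_cases hYS : Y ∈ S
    · exact Or.inl (le_sup (f := id) hYS)
    · refine Or.inr (Finset.disjoint_sup_right.2 fun Y' hY' => ?_)
      exact hH.disjoint_of_isMaxSub hY (mem_children.1 (hS hY')) fun h => hYS (h ▸ hY')

theorem IsSplit.sup_filter_children (hH : IsHierarchy H) (hZ : Z ∈ H) (hZc : 1 < Z.card)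
    (hU : IsSplit H Z U) : ((children H Z).filter (· ⊆ U)).sup id = U := by
  refine (Finset.sup_le fun Y hY => (mem_filter.1 hY).2).antisymm fun x hx => ?_
  obtain ⟨Y, hY, hxY⟩ := hH.exists_isMaxSub_mem hZ hZc (hU.1 hx)
  have hYU : Y ⊆ U := (hU.2.2.2 Y hY).resolve_right (not_disjoint_iff.2 ⟨x, hxY, hx⟩)
  exact mem_sup.2 ⟨Y, mem_filter.2 ⟨mem_children.2 hY, hYU⟩, hxY⟩

theorem IsSplit.eq_of_mem (hH : IsHierarchy H) (hU : IsSplit H Z U) (hUH : U ∈ H)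
    (hY : IsMaxSub H Y Z) (hYU : Y ⊆ U) : U = Y := by
  obtain ⟨Y', hY', hUY'⟩ :=
    exists_isMaxSub_of_ssubset hY.2.1 hUH (ssubset_of_subset_of_ne hU.1 hU.2.2.1)
  have hYY' : Y = Y' := by
    by_contra h
    exact ((hH.nonempty_of_mem hY.1).mono (subset_inter subset_rfl (hYU.trans hUY'))
      ).not_disjoint (hH.disjoint_of_isMaxSub hY hY' h)
  exact (hYY' ▸ hUY').antisymm hYU

theorem IsHierarchy.injOn_downMove (hH : IsHierarchy H) (hY : IsMaxSub H Y Z) :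
    Set.InjOn (downMove H Z) (splitsThrough H Z Y) := by
  have key : ∀ U ∈ splitsThrough H Z Y, ∀ U' ∈ splitsThrough H Z Y,
      downMove H Z U = downMove H Z U' → U = U' ∨ U = Y := by
    intro U hU U' hU' h
    obtain ⟨hU, hYU⟩ := mem_splitsThrough.1 hU
    obtain ⟨hU', hYU'⟩ := mem_splitsThrough.1 hU'
    have hmem : U ∈ downMove H Z U' := h ▸ mem_downMove.2 (Or.inl rfl)
    rcases mem_downMove.1 hmem with h | h | ⟨hUH, -⟩
    · exact Or.inl h
    · obtain ⟨x, hx⟩ := hH.nonempty_of_mem hY.1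
      exact absurd (hYU' hx) (mem_sdiff.1 (h ▸ hYU hx)).2
    · exact Or.inr (hU.eq_of_mem hH hUH hY hYU)
  intro U hU U' hU' h
  rcases key U hU U' hU' h with h₁ | h₁
  · exact h₁
  rcases key U' hU' U hU h.symm with h₂ | h₂
  · exact h₂.symm
  · exact h₁.trans h₂.symm

theorem IsHierarchy.card_splitsThrough (hH : IsHierarchy H) (hZ : Z ∈ H) (hZc : 1 < Z.card)
    (hY : IsMaxSub H Y Z) :
    (splitsThrough H Z Y).card = 2 ^ ((children H Z).card - 1) - 1 := by
  set C := children H Z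
  have hYC : Y ∈ C := mem_children.2 hY
  have hmemt : ∀ {S : Finset (Finset X)}, S ∈ (C.erase Y).powerset.erase (C.erase Y) →
      Y ∉ S ∧ insert Y S ⊆ C ∧ insert Y S ≠ C := by
    intro S hS
    obtain ⟨hSne, hSsub⟩ := mem_erase.1 hS
    have hYS : Y ∉ S := fun h => (mem_erase.1 (mem_powerset.1 hSsub h)).1 rfl
    exact ⟨hYS, insert_subset hYC ((mem_powerset.1 hSsub).trans (erase_subset _ _)),
      fun h => hSne (by rw [← h, erase_insert hYS])⟩
  have hcard : ((C.erase Y).powerset.erase (C.erase Y)).card = 2 ^ (C.card - 1) - 1 := by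
    rw [card_erase_of_mem (mem_powerset_self _), card_powerset, card_erase_of_mem hYC]
  rw [← hcard]
  refine card_bij' (fun U _ => (C.filter (· ⊆ U)).erase Y) (fun S _ => (insert Y S).sup id)
    (fun U hU => ?_) (fun S hS => ?_) (fun U hU => ?_) (fun S hS => ?_)
  · obtain ⟨hU, hYU⟩ := mem_splitsThrough.1 hU
    have hYf : Y ∈ C.filter (· ⊆ U) := mem_filter.2 ⟨hYC, hYU⟩
    refine mem_erase.2 ⟨fun h => hU.2.2.1 ?_,
      mem_powerset.2 (erase_subset_erase _ (filter_subset _ _))⟩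
    have hall : C.filter (· ⊆ U) = C := by rw [← insert_erase hYf, h, insert_erase hYC]
    refine hU.1.antisymm fun x hx => ?_
    obtain ⟨Y', hY', hxY'⟩ := hH.exists_isMaxSub_mem hZ hZc hx
    exact (mem_filter.1 (hall.symm ▸ mem_children.2 hY' : Y' ∈ C.filter (· ⊆ U))).2 hxY'
  · obtain ⟨-, hins, hne⟩ := hmemt hS
    exact mem_splitsThrough.2 ⟨hH.isSplit_sup hins (insert_nonempty _ _) hne,
      le_sup (f := id) (mem_insert_self _ _)⟩
  · obtain ⟨hU, hYU⟩ := mem_splitsThrough.1 hU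
    rw [insert_erase (mem_filter.2 ⟨hYC, hYU⟩)]
    exact hU.sup_filter_children hH hZ hZc
  · obtain ⟨hYS, hins, -⟩ := hmemt hS
    rw [hH.filter_children_subset_sup hins, erase_insert hYS]

theorem IsHierarchy.card_downMoves (hH : IsHierarchy H) (hZ : Z ∈ H) (hZc : 1 < Z.card) :
    (downMoves H Z).card = 2 ^ ((children H Z).card - 1) - 1 := by
  obtain ⟨x, hx⟩ := card_pos.1 (by omega : 0 < Z.card)
  obtain ⟨Y, hY, -⟩ := hH.exists_isMaxSub_mem hZ hZc hx
  have himage : downMoves H Z = (splitsThrough H Z Y).image (downMove H Z) := by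
    ext G
    simp only [mem_downMoves, mem_image, mem_splitsThrough]
    constructor
    · rintro ⟨U, hU, rfl⟩
      rcases hU.2.2.2 Y hY with h | h
      · exact ⟨U, ⟨hU, h⟩, rfl⟩
      · exact ⟨Z \ U, ⟨hU.sdiff, subset_sdiff.2 ⟨hY.2.2.1.subset, h⟩⟩, downMove_sdiff hU.1⟩
    · rintro ⟨U, ⟨hU, -⟩, rfl⟩
      exact ⟨U, hU, rfl⟩
  rw [himage, card_image_of_injOn (hH.injOn_downMove hY), hH.card_splitsThrough hZ hZc hY]

theorem IsHierarchy.ncard_downNbhd_le (hG : IsHierarchy G) :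
    (downNbhd G).ncard ≤ 2 ^ (Fintype.card X - 2) - 1 := by
  have hsub : downNbhd G ⊆ ((properClusters G).biUnion (downMoves G) : Set _) := by
    rintro H ⟨hH, hcov⟩
    obtain ⟨Z, hZ, U, hU, rfl⟩ := hcov.exists_eq_downMove hH hG
    exact mem_biUnion.2 ⟨Z, hZ, mem_downMoves.2 ⟨U, hU, rfl⟩⟩
  calc (downNbhd G).ncard
      ≤ ((properClusters G).biUnion (downMoves G)).card := by
        rw [← Set.ncard_coe_finset]
        exact Set.ncard_le_ncard hsub (finite_toSet _)
    _ ≤ ∑ Z ∈ properClusters G, (downMoves G Z).card := card_biUnion_le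
    _ = ∑ Z ∈ properClusters G, (2 ^ ((children G Z).card - 1) - 1) := sum_congr rfl fun Z hZ =>
        hG.card_downMoves (mem_filter.1 hZ).1 (mem_filter.1 hZ).2.2
    _ ≤ 2 ^ (∑ Z ∈ properClusters G, ((children G Z).card - 1)) - 1 := sum_two_pow_sub_one_le _ _
    _ ≤ 2 ^ (Fintype.card X - 2) - 1 :=
        Nat.sub_le_sub_right (Nat.pow_le_pow_right two_pos hG.sum_card_children_sub_one_le) 1

theorem IsHierarchy.subset_or_subset_of_subset_union {V : Finset X} (hG : IsHierarchy G)
    (hU : U ∈ G) (hV : V ∈ G) (hC : C ∈ G) (hCUV : C ⊆ U ∪ V) (hUVC : ¬U ∪ V ⊆ C) :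
    C ⊆ U ∨ C ⊆ V := by
  by_contra! ⟨hCU, hCV⟩
  obtain ⟨y, hyC, hyU⟩ := not_subset.1 hCU
  obtain ⟨z, hzC, hzV⟩ := not_subset.1 hCV
  have hyV : y ∈ V := (mem_union.1 (hCUV hyC)).resolve_left hyU
  have hzU : z ∈ U := (mem_union.1 (hCUV hzC)).resolve_right hzV
  have hUC := (hG.subset_or_subset hC hU (not_disjoint_iff.2 ⟨z, hzC, hzU⟩)).resolve_left hCU
  have hVC := (hG.subset_or_subset hC hV (not_disjoint_iff.2 ⟨y, hyC, hyV⟩)).resolve_left hCV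
  exact hUVC (union_subset hUC hVC)

theorem IsHierarchy.eq_of_subset_of_ssubset {V D D' E : Finset X} (hG : IsHierarchy G)
    (hD : D ∈ G) (hD' : D' ∈ G) (hUD : U ⊆ D) (hVD' : V ⊆ D') (hDE : D ⊂ E) (hD'E : D' ⊂ E)
    (hUV : U ∪ V = E) : D = U := by
  rcases hG.disjoint_or_subset_or_subset hD hD' with h | h | h
  · refine Subset.antisymm (fun x hx => ?_) hUD
    have hxE : x ∈ U ∪ V := hUV ▸ hDE.subset hx
    exact (mem_union.1 hxE).resolve_right fun hxV => disjoint_left.1 h hx (hVD' hxV)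
  · exact absurd (hUV ▸ union_subset (hUD.trans h) hVD') hD'E.not_subset
  · exact absurd (hUV ▸ union_subset hUD (hVD'.trans h)) hDE.not_subset

section OneProperCluster

variable {a : X} {T : Finset (Finset X)}

theorem isMaxSub_erase_iff (hT : IsHierarchy T) (hP : properClusters T = {univ.erase a}) :
    IsMaxSub T Y (univ.erase a) ↔ ∃ y ∈ univ.erase a, Y = {y} := by
  have hEP : univ.erase a ∈ properClusters T := hP ▸ mem_singleton_self _
  have hbelow : ∀ C ∈ T, C ⊂ univ.erase a → ∃ y, C = {y} := fun C hC hCE => by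
    rcases hT.mem_iff.1 hC with rfl | h | hCP
    · exact absurd (hCE.trans_subset (subset_univ _)) (lt_irrefl _)
    · exact h
    · rw [hP, mem_singleton] at hCP
      exact absurd hCP hCE.ne
  constructor
  · rintro ⟨hY, -, hYE, -⟩
    obtain ⟨y, rfl⟩ := hbelow Y hY hYE
    exact ⟨y, hYE.subset (mem_singleton_self y), rfl⟩
  · rintro ⟨y, hy, rfl⟩
    have hyE : {y} ⊂ univ.erase a := ssubset_of_subset_of_ne (singleton_subset_iff.2 hy)
      fun h => by simpa [← h] using (mem_filter.1 hEP).2.2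
    refine ⟨hT.2.1 y, (mem_filter.1 hEP).1, hyE, fun C hC ⟨hyC, hCE⟩ => ?_⟩
    obtain ⟨z, rfl⟩ := hbelow C hC hCE
    simpa using card_lt_card hyC

theorem card_children_erase (hT : IsHierarchy T) (hP : properClusters T = {univ.erase a}) :
    (children T (univ.erase a)).card = Fintype.card X - 1 := by
  have : children T (univ.erase a) = (univ.erase a).map ⟨singleton, singleton_injective⟩ := by
    ext Y
    simp only [mem_children, isMaxSub_erase_iff hT hP, mem_map, Function.Embedding.coeFn_mk,
      eq_comm]
  rw [this, card_map, card_erase_of_mem (mem_univ a), card_univ]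

theorem ne_univ_of_subset_erase {W : Finset X} (hW : W ⊆ univ.erase a) : W ≠ univ :=
  (hW.trans_ssubset (erase_ssubset (mem_univ a))).ne

theorem IsHierarchy.eq_of_leHP_of_subset (hG : IsHierarchy G)
    (hP : properClusters T = {univ.erase a}) (hle : LeHP G T) (hC : C ∈ properClusters G)
    {D : Finset X} (hD : D ∈ G) (hDu : D ≠ univ) (hCD : C ⊆ D) : C = D := by
  obtain ⟨δ, hδ⟩ := hle
  have hDP : D ∈ properClusters G :=
    mem_filter.2 ⟨hD, hDu, (mem_filter.1 hC).2.2.trans_le (card_le_card hCD)⟩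
  have hδC := hδ.map_mem_properClusters hG hC
  have hδD := hδ.map_mem_properClusters hG hDP
  rw [hP, mem_singleton] at hδC hδD
  by_contra hne
  exact (hδ.2.2.2 C (mem_filter.1 hC).1 D hD (ssubset_of_subset_of_ne hCD hne)).ne
    (hδC.trans hδD.symm)

theorem IsHierarchy.eq_singleton_of_leHP (hT : IsHierarchy T)
    (hP : properClusters T = {univ.erase a}) (hG : IsHierarchy G) (hle : LeHP G T)
    {D : Finset X} (hD : D ∈ G) (hDu : D ≠ univ) (haD : a ∈ D) : D = {a} := by
  obtain ⟨δ, hδ⟩ := hle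
  have haδ : a ∈ δ D := hδ.2.2.1 D hD haD
  rcases hT.mem_iff.1 (hδ.1 D hD) with h | ⟨x, hx⟩ | hP'
  · exact absurd h (hδ.map_ne_univ hG hD hDu)
  · have hDx := (hG.nonempty_of_mem hD).subset_singleton_iff.1 (hx ▸ hδ.2.2.1 D hD)
    obtain rfl := mem_singleton.1 (hDx ▸ haD : a ∈ {x})
    exact hDx
  · rw [hP, mem_singleton] at hP'
    exact absurd (hP' ▸ haδ) (notMem_erase a univ)

theorem IsHierarchy.ssubset_erase_of_leHP (hT : IsHierarchy T)
    (hP : properClusters T = {univ.erase a}) (hG : IsHierarchy G) (hle : LeHP G T)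
    (hEG : univ.erase a ∉ G) {D W : Finset X} (hD : D ∈ G) (hDu : D ≠ univ)
    (hW : W.Nonempty) (hWE : W ⊆ univ.erase a) (hWD : W ⊆ D) : D ⊂ univ.erase a := by
  refine ssubset_of_subset_of_ne (subset_erase.2 ⟨subset_univ D, fun haD => ?_⟩)
    fun h => hEG (h ▸ hD)
  obtain ⟨w, hw⟩ := hW
  have hwa : w = a := mem_singleton.1 (hT.eq_singleton_of_leHP hP hG hle hD hDu haD ▸ hWD hw)
  exact notMem_erase a univ (hwa ▸ hWE hw)

theorem IsHierarchy.subset_erase_of_leHP (hT : IsHierarchy T)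
    (hP : properClusters T = {univ.erase a}) (hG : IsHierarchy G) (hle : LeHP G T)
    (hC : C ∈ properClusters G) : C ⊆ univ.erase a := by
  obtain ⟨hCG, hCu, hCc⟩ := mem_filter.1 hC
  refine subset_erase.2 ⟨subset_univ C, fun haC => ?_⟩
  rw [hT.eq_singleton_of_leHP hP hG hle hCG hCu haC, card_singleton] at hCc
  exact lt_irrefl 1 hCc

theorem IsHierarchy.eq_of_leHP_of_mem (hT : IsHierarchy T)
    (hP : properClusters T = {univ.erase a}) (hG : IsHierarchy G) (hle : LeHP G T)
    (hEG : univ.erase a ∈ G) : G = T := by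
  have hEP : univ.erase a ∈ properClusters T := hP ▸ mem_singleton_self _
  refine hG.eq_of_properClusters_eq hT ?_
  rw [hP]
  ext C
  refine ⟨fun hC => mem_singleton.2 ?_, fun hC => ?_⟩
  · exact hG.eq_of_leHP_of_subset hP hle hC hEG (ne_univ_of_subset_erase subset_rfl)
      (hT.subset_erase_of_leHP hP hG hle hC)
  · rw [mem_singleton.1 hC]
    exact mem_filter.2 ⟨hEG, (mem_filter.1 hEP).2⟩

theorem IsHierarchy.mem_of_leHP_downMove_of_leHP (hT : IsHierarchy T)
    (hP : properClusters T = {univ.erase a}) (hU : IsSplit T (univ.erase a) U)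
    (hG : IsHierarchy G) (hle₁ : LeHP (downMove T (univ.erase a) U) G) (hle₂ : LeHP G T)
    (hEG : univ.erase a ∉ G) : U ∈ G ∧ univ.erase a \ U ∈ G := by
  have hEP : univ.erase a ∈ properClusters T := hP ▸ mem_singleton_self _
  have hM := isHierarchy_downMove hT hEP hU
  obtain ⟨δ, hδ⟩ := hle₁
  have hpart : ∀ W, IsSplit T (univ.erase a) W → W ∈ downMove T (univ.erase a) U →
      δ W ∈ G ∧ W ⊆ δ W ∧ δ W ⊂ univ.erase a := by
    intro W hW hWM
    exact ⟨hδ.1 W hWM, hδ.2.2.1 W hWM, hT.ssubset_erase_of_leHP hP hG hle₂ hEG (hδ.1 W hWM)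
      (hδ.map_ne_univ hM hWM (ne_univ_of_subset_erase hW.1)) hW.2.1 hW.1 (hδ.2.2.1 W hWM)⟩
  obtain ⟨hDU, hUDU, hDUE⟩ := hpart U hU (mem_downMove.2 (Or.inl rfl))
  obtain ⟨hDV, hVDV, hDVE⟩ := hpart _ hU.sdiff (mem_downMove.2 (Or.inr (Or.inl rfl)))
  have hDUeq := hG.eq_of_subset_of_ssubset hDU hDV hUDU hVDV hDUE hDVE (union_sdiff_of_subset hU.1)
  have hDVeq := hG.eq_of_subset_of_ssubset hDV hDU hVDV hUDU hDVE hDUE (sdiff_union_of_subset hU.1)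
  exact ⟨hDUeq ▸ hDU, hDVeq ▸ hDV⟩

theorem IsHierarchy.eq_downMove_of_leHP (hT : IsHierarchy T)
    (hP : properClusters T = {univ.erase a}) (hU : IsSplit T (univ.erase a) U)
    (hG : IsHierarchy G) (hle₁ : LeHP (downMove T (univ.erase a) U) G) (hle₂ : LeHP G T)
    (hEG : univ.erase a ∉ G) : G = downMove T (univ.erase a) U := by
  have hEP : univ.erase a ∈ properClusters T := hP ▸ mem_singleton_self _
  obtain ⟨hUG, hVG⟩ := hT.mem_of_leHP_downMove_of_leHP hP hU hG hle₁ hle₂ hEG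
  refine hG.eq_of_properClusters_eq (isHierarchy_downMove hT hEP hU) (ext fun C => ?_)
  constructor
  · intro hC
    obtain ⟨hCG, hCu, hCc⟩ := mem_filter.1 hC
    have hCE := hT.subset_erase_of_leHP hP hG hle₂ hC
    have hCUV : C ⊆ U ∨ C ⊆ univ.erase a \ U := by
      refine hG.subset_or_subset_of_subset_union hUG hVG hCG ?_ ?_ <;>
        rw [union_sdiff_of_subset hU.1]
      exacts [hCE, fun h => hEG (hCE.antisymm h ▸ hCG)]
    refine mem_filter.2 ⟨mem_downMove.2 ?_, hCu, hCc⟩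
    rcases hCUV with h | h
    · exact Or.inl (hG.eq_of_leHP_of_subset hP hle₂ hC hUG (ne_univ_of_subset_erase hU.1) h)
    · exact Or.inr (Or.inl (hG.eq_of_leHP_of_subset hP hle₂ hC hVG
        (ne_univ_of_subset_erase sdiff_subset) h))
  · intro hC
    obtain ⟨hCM, hCu, hCc⟩ := mem_filter.1 hC
    refine mem_filter.2 ⟨?_, hCu, hCc⟩
    rcases mem_downMove.1 hCM with rfl | rfl | ⟨hCT, hCE⟩
    · exact hUG
    · exact hVG
    · exact absurd (mem_singleton.1 (hP ▸ mem_filter.2 ⟨hCT, hCu, hCc⟩)) hCE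

theorem IsHierarchy.coversHP_downMove (hT : IsHierarchy T)
    (hP : properClusters T = {univ.erase a}) (hU : IsSplit T (univ.erase a) U) :
    CoversHP (downMove T (univ.erase a) U) T := by
  have hET : univ.erase a ∈ T := (mem_filter.1 (hP ▸ mem_singleton_self _)).1
  refine ⟨hT.leHP_downMove hET hU, fun h => notMem_downMove hU (by rw [h]; exact hET),
    fun G hG hle₁ hle₂ => ?_⟩
  by_cases hEG : univ.erase a ∈ G
  · exact Or.inr (hT.eq_of_leHP_of_mem hP hG hle₂ hEG)
  · exact Or.inl (hT.eq_downMove_of_leHP hP hU hG hle₁ hle₂ hEG)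

theorem IsHierarchy.downNbhd_eq_downMoves (hT : IsHierarchy T)
    (hP : properClusters T = {univ.erase a}) : downNbhd T = downMoves T (univ.erase a) := by
  have hEP : univ.erase a ∈ properClusters T := hP ▸ mem_singleton_self _
  ext G
  constructor
  · rintro ⟨hG, hcov⟩
    obtain ⟨Z, hZ, U, hU, rfl⟩ := hcov.exists_eq_downMove hG hT
    rw [hP, mem_singleton] at hZ
    subst hZ
    exact mem_downMoves.2 ⟨U, hU, rfl⟩
  · intro hG
    obtain ⟨U, hU, rfl⟩ := mem_downMoves.1 hG
    exact ⟨isHierarchy_downMove hT hEP hU, hT.coversHP_downMove hP hU⟩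

end OneProperCluster

theorem downNbhd_max_general (a : X) (T : Finset (Finset X))
    (hT : IsHierarchy T) (hP : properClusters T = {Finset.univ.erase a}) :
    (downNbhd T).ncard = 2 ^ (Fintype.card X - 2) - 1 ∧
    ∀ T' : Finset (Finset X), IsHierarchy T' →
      (downNbhd T').ncard ≤ 2 ^ (Fintype.card X - 2) - 1 := by
  obtain ⟨hET, -, hEc⟩ := mem_filter.1 (hP ▸ mem_singleton_self _ : univ.erase a ∈ properClusters T)
  refine ⟨?_, fun T' hT' => hT'.ncard_downNbhd_le⟩
  rw [hT.downNbhd_eq_downMoves hP, Set.ncard_coe_finset, hT.card_downMoves hET hEc,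
    card_children_erase hT hP, Nat.sub_sub]

/-- a tree whose only proper cluster is `X \ {a}` has down-neighbourhood of
size `S(n-1,2) = 2^(n-2) - 1`, the maximum down-neighbourhood size over all trees. -/
theorem downNbhd_max (hn : 3 ≤ Fintype.card X) (a : X) (T : Finset (Finset X))
    (hT : IsHierarchy T) (hP : properClusters T = {Finset.univ.erase a}) :
    (downNbhd T).ncard = 2 ^ (Fintype.card X - 2) - 1 ∧
    ∀ T' : Finset (Finset X), IsHierarchy T' →
      (downNbhd T').ncard ≤ 2 ^ (Fintype.card X - 2) - 1 :=
  downNbhd_max_general a T hT hP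
end
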